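/- arXiv:1801.04024 — 7 statements merged into one kernel-verified Lean document; each statement's English description precedes it below -/
import Mathlib

section
/- Let G be a countable discrete group acting continuously, faithfully, minimally and proximally on a compact Hausdorff space X. Then every non-identity element of G has an infinite conjugacy class. -/
/-- A continuous action of `G` on a topological space `X` is proximal if for all `x, y ∈ X`
the closure of `{(g • x, g • y) : g ∈ G}` in `X × X` meets the diagonal. -/
def IsProximalAction (G X : Type*) [Group G] [MulAction G X] [TopologicalSpace X] : Prop :=
  ∀ x y : X, ∃ z : X, (z, z) ∈ closure {p : X × X | ∃ g : G, p = (g • x, g • y)}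

section Aux

variable {G X : Type} [Group G] [TopologicalSpace X] [CompactSpace X] [T2Space X]
  [MulAction G X] [ContinuousConstSMul G X]

omit [CompactSpace X] [T2Space X] in
private lemma smul_tuple_mem_closure {ι : Type} (x : ι → X) (g : G)
    {p : ι → X} (hp : p ∈ closure (Set.range fun g : G => fun i => g • x i)) :
    (fun i => g • p i) ∈ closure (Set.range fun g : G => fun i => g • x i) := by
  have hcont : Continuous fun f : ι → X => fun i => g • f i :=
    continuous_pi fun i => (continuous_const_smul g).comp (continuous_apply i)
  have h1 : (fun i => g • p i) ∈ closure ((fun f : ι → X => fun i => g • f i) ''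
      (Set.range fun g : G => fun i => g • x i)) :=
    (image_closure_subset_closure_image hcont) ⟨p, hp, rfl⟩
  refine closure_mono ?_ h1
  rintro _ ⟨_, ⟨h, rfl⟩, rfl⟩
  exact ⟨g * h, by funext i; simp [mul_smul]⟩

private lemma finProx [Nonempty X] (hProx : IsProximalAction G X) :
    ∀ (n : ℕ) (x : Fin n → X), ∃ z : X,
      (fun _ : Fin n => z) ∈ closure (Set.range fun g : G => fun i => g • x i) := by
  intro n
  induction n with
  | zero =>
    intro x
    exact ⟨Classical.arbitrary X, subset_closure ⟨1, by funext i; exact i.elim0⟩⟩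
  | succ n ih =>
    intro x
    obtain ⟨z, hz⟩ := ih fun i => x i.castSucc
    set A := closure (Set.range fun g : G => fun i : Fin (n+1) => g • x i) with hA
    have hAc : IsCompact A := isClosed_closure.isCompact
    have hπ : Continuous fun f : Fin (n+1) → X => fun i : Fin n => f i.castSucc :=
      continuous_pi fun i => continuous_apply _
    have himg : closure (Set.range fun g : G => fun i : Fin n => g • x i.castSucc)
        ⊆ (fun f : Fin (n+1) → X => fun i : Fin n => f i.castSucc) '' A := by
      refine closure_minimal ?_ ((hAc.image hπ).isClosed)
      rintro _ ⟨g, rfl⟩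
      exact ⟨_, subset_closure ⟨g, rfl⟩, rfl⟩
    obtain ⟨p, hpA, hpz⟩ := himg hz
    have hpz' : ∀ i : Fin n, p i.castSucc = z := fun i => congrFun hpz i
    obtain ⟨u, hu⟩ := hProx z (p (Fin.last n))
    set φ : X × X → (Fin (n+1) → X) :=
      fun q => fun i => Fin.lastCases q.2 (fun _ => q.1) i with hφ
    have hφc : Continuous φ := by
      refine continuous_pi fun i => ?_
      induction i using Fin.lastCases with
      | last => simpa [hφ] using continuous_snd
      | cast j => simpa [hφ] using continuous_fst
    have hφP : φ '' {q : X × X | ∃ g : G, q = (g • z, g • p (Fin.last n))} ⊆ A := by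
      rintro _ ⟨_, ⟨g, rfl⟩, rfl⟩
      have heq : φ (g • z, g • p (Fin.last n)) = fun i => g • p i := by
        funext i
        induction i using Fin.lastCases with
        | last => simp [hφ]
        | cast j => simp [hφ, hpz' j]
      rw [heq]
      exact smul_tuple_mem_closure x g hpA
    have hfin : φ (u, u) ∈ A := by
      have h1 : φ (u, u) ∈ closure (φ ''
          {q : X × X | ∃ g : G, q = (g • z, g • p (Fin.last n))}) :=
        (image_closure_subset_closure_image hφc) ⟨(u, u), hu, rfl⟩
      exact closure_minimal hφP isClosed_closure h1
    refine ⟨u, ?_⟩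
    have : φ (u, u) = fun _ : Fin (n+1) => u := by
      funext i
      induction i using Fin.lastCases with
      | last => simp [hφ]
      | cast j => simp [hφ]
    rwa [this] at hfin

private lemma piProx [Nonempty X] (hProx : IsProximalAction G X)
    (ι : Type) [Finite ι] (x : ι → X) :
    ∃ z : X, (fun _ : ι => z) ∈ closure (Set.range fun g : G => fun i => g • x i) := by
  obtain ⟨n, ⟨e⟩⟩ := Finite.exists_equiv_fin ι
  obtain ⟨z, hz⟩ := finProx hProx n (fun j => x (e.symm j))
  refine ⟨z, ?_⟩
  have hR : Continuous fun f : Fin n → X => fun i : ι => f (e i) :=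
    continuous_pi fun i => continuous_apply _
  have h1 : (fun _ : ι => z) ∈ closure ((fun f : Fin n → X => fun i : ι => f (e i)) ''
      (Set.range fun g : G => fun j => g • x (e.symm j))) :=
    (image_closure_subset_closure_image hR) ⟨_, hz, rfl⟩
  refine closure_mono ?_ h1
  rintro _ ⟨_, ⟨g, rfl⟩, rfl⟩
  exact ⟨g, by funext i; simp⟩

end Aux

/-- If a countable discrete group `G` acts continuously, faithfully, minimally and proximally
on a compact Hausdorff space `X`, then every non-identity element of `G` has an infinite
conjugacy class. -/
theorem infinite_conjugacy_class_of_faithful_minimal_proximal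
    (G : Type) [Group G] [Countable G]
    (X : Type) [TopologicalSpace X] [CompactSpace X] [T2Space X]
    [MulAction G X] [ContinuousConstSMul G X]
    (hFaithful : ∀ g : G, (∀ x : X, g • x = x) → g = 1)
    (hMinimal : ∀ x : X, Dense (Set.range fun g : G => g • x))
    (hProximal : IsProximalAction G X) :
    ∀ g : G, g ≠ 1 → {h : G | IsConj g h}.Infinite := by
  intro g hg
  by_contra hfin
  rw [Set.not_infinite] at hfin
  cases isEmpty_or_nonempty X with
  | inl hE => exact hg (hFaithful g fun x => (IsEmpty.false x).elim)
  | inr hNE =>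
    set C := {h : G | IsConj g h} with hC
    haveI : Finite ↥C := hfin.to_subtype
    haveI := Fintype.ofFinite ↥C
    have x₀ : X := Classical.arbitrary X
    set x : Option ↥C → X := fun i => i.elim x₀ (fun c => (c : G) • x₀) with hx
    obtain ⟨z, hz⟩ := piProx hProximal (Option ↥C) x
    have hconj : ∀ (k : G) (c : ↥C), k * (c : G) * k⁻¹ ∈ C :=
      fun k c => c.2.trans (isConj_iff.mpr ⟨k, rfl⟩)
    set π : G → (↥C → ↥C) := fun k c => ⟨k * (c : G) * k⁻¹, hconj k c⟩ with hπdef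
    set Gr : (↥C → ↥C) → Set (Option ↥C → X) :=
      fun σ => {f | ∀ c : ↥C, f (some c) = (σ c : G) • f none} with hGr
    have hGrClosed : ∀ σ, IsClosed (Gr σ) := by
      intro σ
      have : Gr σ = ⋂ c : ↥C, {f : Option ↥C → X | f (some c) = (σ c : G) • f none} := by
        ext f; simp [hGr]
      rw [this]
      exact isClosed_iInter fun c =>
        isClosed_eq (continuous_apply _) ((continuous_const_smul _).comp (continuous_apply _))
    have hsub : (Set.range fun k : G => fun i => k • x i) ⊆ ⋃ σ ∈ Set.range π, Gr σ := by
      rintro _ ⟨k, rfl⟩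
      refine Set.mem_biUnion ⟨k, rfl⟩ ?_
      intro c
      show k • x (some c) = (π k c : G) • k • x none
      show k • ((c : G) • x₀) = (k * (c : G) * k⁻¹) • k • x₀
      rw [smul_smul, smul_smul]
      congr 1
      group
    have hclosed : IsClosed (⋃ σ ∈ Set.range π, Gr σ) :=
      (Set.toFinite (Set.range π)).isClosed_biUnion fun σ _ => hGrClosed σ
    have hzmem := closure_minimal hsub hclosed hz
    obtain ⟨S, ⟨⟨k, rfl⟩, hσ⟩⟩ : ∃ σ ∈ Set.range π, (fun _ : Option ↥C => z) ∈ Gr σ := by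
      simpa using hzmem
    -- every element of C fixes z
    have hfix : ∀ h ∈ C, h • z = z := by
      intro h hh
      have hc : k⁻¹ * h * k ∈ C := hh.trans (isConj_iff.mpr ⟨k⁻¹, by group⟩)
      have := hσ ⟨k⁻¹ * h * k, hc⟩
      simp only [hπdef] at this
      have heq : k * (k⁻¹ * h * k) * k⁻¹ = h := by group
      rw [heq] at this
      exact this.symm
    -- the orbit of z is fixed by every element of C
    have horb : ∀ (m : G), ∀ h ∈ C, h • (m • z) = m • z := by
      intro m h hh
      have hc : m⁻¹ * h * m ∈ C := hh.trans (isConj_iff.mpr ⟨m⁻¹, by group⟩)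
      calc h • m • z = (h * m) • z := (mul_smul h m z).symm
        _ = (m * (m⁻¹ * h * m)) • z := by congr 1; group
        _ = m • ((m⁻¹ * h * m) • z) := mul_smul _ _ _
        _ = m • z := by rw [hfix _ hc]
    -- hence all of X is fixed by g
    have hall : ∀ y : X, g • y = y := by
      have hFcl : IsClosed {y : X | ∀ h ∈ C, h • y = y} := by
        have : {y : X | ∀ h ∈ C, h • y = y} = ⋂ h ∈ C, {y : X | h • y = y} := by
          ext y; simp
        rw [this]
        exact isClosed_biInter fun h _ =>
          isClosed_eq (continuous_const_smul _) continuous_id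
      have hsub2 : Set.range (fun m : G => m • z) ⊆ {y : X | ∀ h ∈ C, h • y = y} := by
        rintro _ ⟨m, rfl⟩
        exact horb m
      have hdense := (hMinimal z).closure_eq
      have : (Set.univ : Set X) ⊆ {y : X | ∀ h ∈ C, h • y = y} := by
        rw [← hdense]
        exact closure_minimal hsub2 hFcl
      intro y
      exact this (Set.mem_univ y) g (IsConj.refl g)
    exact hg (hFaithful g hall)
end

section
/- Let G be a countable discrete group acting continuously, minimally and proximally on a compact Hausdorff space X, and let g ∈ G be an element with a finite conjugacy class. Then g acts trivially on X: g • x = x for all x ∈ X. -/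
open Filter Topology

/-- Key step: if every element of a finite set `S` of conjugates of `g` fixes some point, and
`c` is a conjugate of `g` not in `S`, then there is a strictly larger set of conjugates of `g`
with a common fixed point. -/
private lemma exists_larger_fixed
    {G : Type} [Group G] {X : Type} [TopologicalSpace X] [T2Space X]
    [MulAction G X] [ContinuousConstSMul G X]
    (hProximal : IsProximalAction G X)
    (g : G) (hg : {h : G | IsConj g h}.Finite)
    (S : Finset G) (hS : ∀ s ∈ S, IsConj g s)
    (c : G) (hcC : IsConj g c) (hcS : c ∉ S)
    (z : X) (hz : ∀ s ∈ S, s • z = z) :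
    ∃ (S' : Finset G) (y : X), (∀ s ∈ S', IsConj g s) ∧ S'.card = S.card + 1 ∧
      ∀ s ∈ S', s • y = y := by
  classical
  obtain ⟨w, hw⟩ := hProximal z (c • z)
  rw [mem_closure_iff_ultrafilter] at hw
  obtain ⟨U, hU, hUw⟩ := hw
  -- lift U to an ultrafilter on G
  set f : G → X × X := fun k => (k • z, k • (c • z)) with hf
  set ψ : X × X → G := fun p => if h : ∃ k : G, p = (k • z, k • (c • z)) then h.choose else 1
    with hψ
  set V : Ultrafilter G := U.map ψ with hV
  have hfψ : ∀ p ∈ {p : X × X | ∃ k : G, p = (k • z, k • (c • z))}, f (ψ p) = p := by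
    intro p hp
    have h1 : ψ p = hp.choose := dif_pos hp
    rw [h1]
    exact hp.choose_spec.symm
  have hmap : (V : Filter G).map f = U := by
    have h' : (V : Filter G).map f = (U : Filter (X × X)).map (f ∘ ψ) := by
      simp [hV, Filter.map_map]
    rw [h']
    have h'' : (f ∘ ψ) =ᶠ[(U : Filter (X × X))] id :=
      Filter.eventually_of_mem hU fun p hp => hfψ p hp
    rw [Filter.map_congr h'', Filter.map_id]
  have hftend : Filter.Tendsto f (V : Filter G) (𝓝 (w, w)) := by
    rw [Filter.Tendsto, hmap]; exact hUw
  have h1 : Filter.Tendsto (fun k : G => k • z) (V : Filter G) (𝓝 w) :=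
    (continuous_fst.tendsto (w, w)).comp hftend
  have h2 : Filter.Tendsto (fun k : G => k • (c • z)) (V : Filter G) (𝓝 w) :=
    (continuous_snd.tendsto (w, w)).comp hftend
  -- the conjugation data takes finitely many values, so is constant along the ultrafilter
  set θ : G → G × Finset G := fun k => (k * c * k⁻¹, S.image fun s => k * s * k⁻¹) with hθ
  have hconjmem : ∀ k a : G, IsConj g a → IsConj g (k * a * k⁻¹) := fun k a ha =>
    ha.trans (isConj_iff.mpr ⟨k, rfl⟩)
  have hfin : (Set.range θ).Finite := by
    have : Set.range θ ⊆ {h : G | IsConj g h} ×ˢ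
        ↑((hg.toFinset.powerset : Finset (Finset G)) : Set (Finset G)) := by
      rintro p ⟨k, rfl⟩
      constructor
      · exact hconjmem k c hcC
      · have hsub : (θ k).2 ⊆ hg.toFinset := by
          intro a ha
          obtain ⟨s, hsS, rfl⟩ := Finset.mem_image.mp ha
          exact hg.mem_toFinset.mpr (hconjmem k s (hS s hsS))
        simpa [Finset.mem_coe, Finset.mem_powerset] using hsub
    exact Set.Finite.subset (hg.prod (Set.Finite.ofFinset hg.toFinset.powerset fun _ => Iff.rfl))
      this
  obtain ⟨v, hvmem, hvpure⟩ :=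
    Ultrafilter.eq_pure_of_finite_mem (f := V.map θ) hfin
      (Filter.mem_map.mpr (by
        have : θ ⁻¹' Set.range θ = Set.univ := by
          ext k; simp [Set.mem_range]
        rw [this]; exact Filter.univ_mem))
  obtain ⟨c', S'⟩ := v
  have hE : {k : G | θ k = (c', S')} ∈ V := by
    have h' : θ ⁻¹' {(c', S')} ∈ V := by
      rw [← Ultrafilter.mem_map, hvpure]
      exact rfl
    exact h'
  have hEne : {k : G | θ k = (c', S')}.Nonempty := Ultrafilter.nonempty_of_mem hE
  obtain ⟨k₀, hk₀⟩ := hEne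
  have hk₀1 : k₀ * c * k₀⁻¹ = c' := congrArg Prod.fst hk₀
  have hk₀2 : S.image (fun s => k₀ * s * k₀⁻¹) = S' := congrArg Prod.snd hk₀
  -- c' fixes w
  have hc'w : c' • w = w := by
    have ht1 : Filter.Tendsto (fun k : G => c' • (k • z)) (V : Filter G) (𝓝 (c' • w)) :=
      ((continuous_const_smul c').tendsto w).comp h1
    have heq : (fun k : G => c' • (k • z)) =ᶠ[(V : Filter G)]
        (fun k : G => k • (c • z)) := by
      refine Filter.eventually_of_mem hE fun k hk => ?_
      have hk1 : k * c * k⁻¹ = c' := congrArg Prod.fst hk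
      show c' • (k • z) = k • (c • z)
      rw [← hk1, smul_smul, smul_smul]
      congr 1
      group
    have ht2 : Filter.Tendsto (fun k : G => c' • (k • z)) (V : Filter G) (𝓝 w) :=
      Filter.Tendsto.congr' heq.symm h2
    exact tendsto_nhds_unique ht1 ht2
  -- every element of S' fixes w
  have hS'w : ∀ d ∈ S', d • w = w := by
    intro d hd
    have ht1 : Filter.Tendsto (fun k : G => d • (k • z)) (V : Filter G) (𝓝 (d • w)) :=
      ((continuous_const_smul d).tendsto w).comp h1
    have heq : (fun k : G => d • (k • z)) =ᶠ[(V : Filter G)] (fun k : G => k • z) := by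
      refine Filter.eventually_of_mem hE fun k hk => ?_
      have hk2 : S.image (fun s => k * s * k⁻¹) = S' := congrArg Prod.snd hk
      rw [← hk2] at hd
      obtain ⟨s, hsS, hsd⟩ := Finset.mem_image.mp hd
      show d • (k • z) = k • z
      rw [← hsd, smul_smul]
      have hks : k * s * k⁻¹ * k = k * s := by group
      rw [hks, ← smul_smul, hz s hsS]
    have ht2 : Filter.Tendsto (fun k : G => d • (k • z)) (V : Filter G) (𝓝 w) :=
      Filter.Tendsto.congr' heq.symm h1
    exact tendsto_nhds_unique ht1 ht2
  -- c' is not in S'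
  have hc'S' : c' ∉ S' := by
    intro hmem
    rw [← hk₀2] at hmem
    obtain ⟨s, hsS, hsd⟩ := Finset.mem_image.mp hmem
    rw [← hk₀1] at hsd
    have : s = c := by
      have := mul_right_cancel hsd
      exact mul_left_cancel this
    exact hcS (this ▸ hsS)
  refine ⟨insert c' S', w, ?_, ?_, ?_⟩
  · intro s hs
    rcases Finset.mem_insert.mp hs with h | h
    · subst h; rw [← hk₀1]; exact hconjmem k₀ c hcC
    · rw [← hk₀2] at h
      obtain ⟨s', hs', rfl⟩ := Finset.mem_image.mp h
      exact hconjmem k₀ s' (hS s' hs')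
  · rw [Finset.card_insert_of_notMem hc'S', ← hk₀2,
      Finset.card_image_of_injective _ (fun a b hab => by
        have := mul_right_cancel hab
        exact mul_left_cancel this)]
  · intro s hs
    rcases Finset.mem_insert.mp hs with h | h
    · subst h; exact hc'w
    · exact hS'w s h

/-- If a countable discrete group `G` acts continuously, minimally and proximally on a compact
Hausdorff space `X`, then every element of `G` with a finite conjugacy class acts trivially. -/
theorem finite_conjugacy_class_acts_trivially
    (G : Type) [Group G] [Countable G]
    (X : Type) [TopologicalSpace X] [CompactSpace X] [T2Space X]
    [MulAction G X] [ContinuousConstSMul G X]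
    (hMinimal : ∀ x : X, Dense (Set.range fun g : G => g • x))
    (hProximal : IsProximalAction G X)
    (g : G) (hg : {h : G | IsConj g h}.Finite) :
    ∀ x : X, g • x = x := by
  classical
  intro x
  -- by induction, build larger and larger sets of conjugates of g with a common fixed point
  have key : ∀ n : ℕ, n ≤ hg.toFinset.card →
      ∃ (S : Finset G) (z : X), (∀ s ∈ S, IsConj g s) ∧ S.card = n ∧ ∀ s ∈ S, s • z = z := by
    intro n
    induction n with
    | zero => intro _; exact ⟨∅, x, by simp, by simp, by simp⟩
    | succ m ih =>
      intro hm
      obtain ⟨S, z, hS, hcard, hz⟩ := ih (Nat.le_of_succ_le hm)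
      have hSsub : S ⊆ hg.toFinset := fun s hs => hg.mem_toFinset.mpr (hS s hs)
      have hSS : S ⊂ hg.toFinset := by
        refine Finset.ssubset_iff_of_subset hSsub |>.mpr ?_
        by_contra hcon
        push_neg at hcon
        have : hg.toFinset ⊆ S := hcon
        have := Finset.card_le_card this
        omega
      obtain ⟨c, hcmem, hcS⟩ := Finset.exists_of_ssubset hSS
      obtain ⟨S', y, h1, h2, h3⟩ := exists_larger_fixed hProximal g hg S hS c
        (hg.mem_toFinset.mp hcmem) hcS z hz
      exact ⟨S', y, h1, by omega, h3⟩
  obtain ⟨S, z, hS, hcard, hz⟩ := key hg.toFinset.card le_rfl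
  -- S is the whole conjugacy class
  have hSsub : S ⊆ hg.toFinset := fun s hs => hg.mem_toFinset.mpr (hS s hs)
  have hSeq : S = hg.toFinset := Finset.eq_of_subset_of_card_le hSsub (le_of_eq hcard.symm)
  -- z is fixed by every conjugate of g
  have hzfix : ∀ c : G, IsConj g c → c • z = z := by
    intro c hc
    exact hz c (hSeq ▸ hg.mem_toFinset.mpr hc)
  -- the set of points fixed by all conjugates of g is closed, invariant and nonempty
  set A : Set X := {y : X | ∀ c : G, IsConj g c → c • y = y} with hA
  have hzA : z ∈ A := hzfix
  have hAclosed : IsClosed A := by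
    have : A = ⋂ c ∈ {h : G | IsConj g h}, {y : X | c • y = y} := by
      ext y; simp [hA]
    rw [this]
    exact isClosed_biInter fun c _ =>
      isClosed_eq (continuous_const_smul c) continuous_id
  have hAinv : ∀ (k : G), ∀ y ∈ A, k • y ∈ A := by
    intro k y hy c hc
    have h1 : IsConj g (k⁻¹ * c * k) := hc.trans (isConj_iff.mpr ⟨k⁻¹, by group⟩)
    have h2 : (k⁻¹ * c * k) • y = y := hy _ h1
    calc c • k • y = (c * k) • y := smul_smul c k y
      _ = (k * (k⁻¹ * c * k)) • y := by congr 1; group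
      _ = k • ((k⁻¹ * c * k) • y) := (smul_smul _ _ _).symm
      _ = k • y := by rw [h2]
  -- by minimality A = X
  have hxA : x ∈ A := by
    have horb : Set.range (fun k : G => k • z) ⊆ A := by
      rintro _ ⟨k, rfl⟩; exact hAinv k z hzA
    have : closure (Set.range fun k : G => k • z) = Set.univ :=
      (hMinimal z).closure_eq
    have hAall : A = Set.univ := by
      apply Set.eq_univ_of_univ_subset
      rw [← this]
      exact closure_minimal horb hAclosed
    rw [hAall]; trivial
  exact hxA g (IsConj.refl g)
end

section
/- Let G be a countable ICC group and let X ⊆ G be a finite symmetric subset containing the identity with |X| ≥ 2. Then there exist a configuration s ∈ 2^G and a finite symmetric subset Y ⊆ G with X ⊆ Y such that: (1) for every a, b ∈ G, if s(a) = s(b) = 1 then a and b are X-apart; (2) for every g, h ∈ Y^100 (the set of products of 100 elements of Y) there exists a ∈ Y with s(g·a) = s(h·a) = 1. -/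
open scoped Pointwise

/-- A group is ICC if it is nontrivial and every non-identity element has an infinite
conjugacy class. -/
def IsICC (G : Type*) [Group G] : Prop :=
  Nontrivial G ∧ ∀ g : G, g ≠ 1 → {h : G | IsConj g h}.Infinite

/-- For a finite symmetric `X ⊆ G`, elements `a, b ∈ G` are `X`-apart if `a⁻¹ * b ∉ X`. -/
def XApart {G : Type*} [Group G] (X : Finset G) (a b : G) : Prop :=
  a⁻¹ * b ∉ X

/-!
The ICC property and B. H. Neumann's lemma on coset covers let us choose, one at a time, as many
elements `W` as we like that are generic for `Z = X * X⁻¹`: two expressions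
`w₁ * z * w₂⁻¹ = w₃ * z' * w₄⁻¹ ≠ 1` always share an element of `W`. Hence for every pair
`g ≠ h` in `P = Y ^ 100`, all but two `w ∈ W` give pairwise disjoint blocks `g w X ∪ h w X`.
A random `T ⊆ P * W * X` misses the pattern `T ∩ (g w X ∪ h w X) = {g w, h w}` on all blocks of
some pair with probability at most `|P|² (1 - 4^{-|X|})^{|W| - 2}`, which is `< 1` for `|W|` large
since `|P|` grows only polynomially in `|W|`. The configuration marks the points `p ∈ T` with no
other point of `T` in `p X`.
-/

open MulAction in
theorem MulAction.exists_notMem_forall_smul_ne {G α : Type*} [Group G] [MulAction G α]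
    [Infinite G] (F : Finset G) (C : Finset (α × α)) (hC : ∀ p ∈ C, (orbit G p.1).Infinite) :
    ∃ g ∉ F, ∀ p ∈ C, g • p.1 ≠ p.2 := by
  have htransporter (p : α × α) :
      ∃ g₀ : G, {g : G | g • p.1 = p.2} ⊆ g₀ • (stabilizer G p.1 : Set G) := by
    by_cases h : ∃ g₀ : G, g₀ • p.1 = p.2
    · obtain ⟨g₀, hg₀⟩ := h
      refine ⟨g₀, fun g hg => mem_leftCoset_iff g₀ |>.mpr ?_⟩
      rw [SetLike.mem_coe, mem_stabilizer_iff, mul_smul, inv_smul_eq_iff, hg₀]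
      exact hg
    · exact ⟨1, fun g hg => (h ⟨g, hg⟩).elim⟩
  choose g₀ hg₀ using htransporter
  by_contra! hcover
  have hcovers : ⋃ i ∈ F.disjSum C, Sum.elim id g₀ i •
      ((Sum.elim (fun _ => ⊥) (fun p => stabilizer G p.1) i : Subgroup G) : Set G) = Set.univ := by
    refine Set.eq_univ_of_forall fun g => Set.mem_iUnion₂.mpr ?_
    by_cases hg : g ∈ F
    · exact ⟨Sum.inl g, Finset.inl_mem_disjSum.mpr hg, by simp⟩
    · obtain ⟨p, hp, hgp⟩ := hcover g hg
      exact ⟨Sum.inr p, Finset.inr_mem_disjSum.mpr hp, hg₀ p hgp⟩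
  obtain ⟨i, hi, hfin⟩ := Subgroup.exists_finiteIndex_of_leftCoset_cover hcovers
  cases i with
  | inl g =>
    exact hfin.index_ne_zero (by simp [Subgroup.index_bot, Nat.card_eq_zero_of_infinite])
  | inr p =>
    have hindex := hfin.index_ne_zero
    rw [Sum.elim_inr, index_stabilizer] at hindex
    exact hC p (Finset.inr_mem_disjSum.mp hi) (Set.finite_of_ncard_ne_zero hindex)

theorem IsICC.infinite {G : Type*} [Group G] (hG : IsICC G) : Infinite G := by
  obtain ⟨g, hg⟩ := @exists_ne G hG.1 1
  exact Set.infinite_univ_iff.mp ((hG.2 g hg).mono (Set.subset_univ _))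

theorem IsICC.exists_notMem_forall_conj_ne {G : Type*} [Group G] (hG : IsICC G)
    (F : Finset G) (C : Finset (G × G)) (hC : ∀ p ∈ C, p.1 ≠ 1) :
    ∃ t ∉ F, ∀ p ∈ C, t * p.1 * t⁻¹ ≠ p.2 := by
  have : Infinite (ConjAct G) := hG.infinite
  obtain ⟨t, htF, ht⟩ := MulAction.exists_notMem_forall_smul_ne
    (F.map ConjAct.toConjAct.toEquiv.toEmbedding) C fun p hp => by
      have horbit : MulAction.orbit (ConjAct G) p.1 = {h | IsConj p.1 h} := by
        ext h; exact ConjAct.mem_orbit_conjAct.trans isConj_comm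
      exact horbit ▸ hG.2 p.1 (hC p hp)
  refine ⟨ConjAct.ofConjAct t, fun h => htF (Finset.mem_map_equiv.mpr h), fun p hp => ?_⟩
  simpa [ConjAct.smul_def] using ht p hp

section Generic

variable {G : Type*} [Group G]

structure IsGenericFor (Z W : Finset G) : Prop where
  eq_of_mul_mul_inv_eq_one : ∀ w ∈ W, ∀ w' ∈ W, ∀ z ∈ Z, w * z * w'⁻¹ = 1 → w = w'
  eq_or_eq_of_mul_mul_inv_eq : ∀ w₁ ∈ W, ∀ w₂ ∈ W, ∀ w₃ ∈ W, ∀ w₄ ∈ W, ∀ z ∈ Z, ∀ z' ∈ Z,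
    w₁ * z * w₂⁻¹ = w₃ * z' * w₄⁻¹ → w₁ * z * w₂⁻¹ ≠ 1 →
      w₁ = w₃ ∨ w₂ = w₄ ∨ w₁ = w₄ ∨ w₂ = w₃

namespace IsGenericFor

variable [DecidableEq G] {Z W : Finset G}

theorem eq_or_eq_of_mul_mul_inv_eq_of_notMem {t : G} (hF : t ∉ W * Z * W⁻¹ * W * Z)
    (hconj : ∀ z ∈ Z, z ≠ 1 → t * z * t⁻¹ ∉ W * Z * W⁻¹) (hZ : ∀ z ∈ Z, z⁻¹ ∈ Z)
    {w₂ w₃ w₄ : G} (h₂ : w₂ ∈ insert t W) (h₃ : w₃ ∈ insert t W) (h₄ : w₄ ∈ insert t W)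
    {z z' : G} (hz : z ∈ Z) (hz' : z' ∈ Z) (heq : t * z * w₂⁻¹ = w₃ * z' * w₄⁻¹)
    (hne : t * z * w₂⁻¹ ≠ 1) : t = w₃ ∨ t = w₄ := by
  by_contra! hnew
  have hw₃ : w₃ ∈ W := (Finset.mem_insert.mp h₃).resolve_left (Ne.symm hnew.1)
  have hw₄ : w₄ ∈ W := (Finset.mem_insert.mp h₄).resolve_left (Ne.symm hnew.2)
  rcases Finset.mem_insert.mp h₂ with rfl | h₂
  · refine hconj z hz (fun hz1 => hne (by simp [hz1])) ?_
    rw [heq]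
    exact Finset.mul_mem_mul (Finset.mul_mem_mul hw₃ hz') (Finset.inv_mem_inv hw₄)
  · refine hF ?_
    have ht : t = w₃ * z' * w₄⁻¹ * w₂ * z⁻¹ := by
      rw [← heq]; group
    rw [ht]
    exact Finset.mul_mem_mul (Finset.mul_mem_mul (Finset.mul_mem_mul
      (Finset.mul_mem_mul hw₃ hz') (Finset.inv_mem_inv hw₄)) h₂) (hZ z hz)

theorem insert (hW : IsGenericFor Z W) (hZ : ∀ z ∈ Z, z⁻¹ ∈ Z) {t : G} (hWZ : t ∉ W * Z)
    (hF : t ∉ W * Z * W⁻¹ * W * Z) (hconj : ∀ z ∈ Z, z ≠ 1 → t * z * t⁻¹ ∉ W * Z * W⁻¹) :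
    IsGenericFor Z (insert t W) := by
  constructor
  · intro w hw w' hw' z hz h1
    rcases Finset.mem_insert.mp hw with rfl | hwW <;>
      rcases Finset.mem_insert.mp hw' with rfl | hw'W
    · rfl
    · refine (hWZ ?_).elim
      rw [show w = w' * z⁻¹ by rw [← mul_inv_eq_one.mp h1]; group]
      exact Finset.mul_mem_mul hw'W (hZ z hz)
    · refine (hWZ ?_).elim
      rw [← mul_inv_eq_one.mp h1]
      exact Finset.mul_mem_mul hwW hz
    · exact hW.eq_of_mul_mul_inv_eq_one w hwW w' hw'W z hz h1
  · intro w₁ h₁ w₂ h₂ w₃ h₃ w₄ h₄ z hz z' hz' heq hne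
    have hinv : w₂ * z⁻¹ * w₁⁻¹ = w₄ * z'⁻¹ * w₃⁻¹ := by
      rw [show w₂ * z⁻¹ * w₁⁻¹ = (w₁ * z * w₂⁻¹)⁻¹ by group, heq]; group
    have hinv_ne : w₂ * z⁻¹ * w₁⁻¹ ≠ 1 := by
      rw [show w₂ * z⁻¹ * w₁⁻¹ = (w₁ * z * w₂⁻¹)⁻¹ by group]; exact inv_ne_one.mpr hne
    by_cases ht₁ : w₁ = t
    · subst ht₁
      obtain h | h := eq_or_eq_of_mul_mul_inv_eq_of_notMem hF hconj hZ h₂ h₃ h₄ hz hz' heq hne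
      exacts [Or.inl h, Or.inr (Or.inr (Or.inl h))]
    by_cases ht₂ : w₂ = t
    · subst ht₂
      obtain h | h := eq_or_eq_of_mul_mul_inv_eq_of_notMem hF hconj hZ h₁ h₄ h₃ (hZ z hz)
        (hZ z' hz') hinv hinv_ne
      exacts [Or.inr (Or.inl h), Or.inr (Or.inr (Or.inr h))]
    by_cases ht₃ : w₃ = t
    · subst ht₃
      obtain h | h := eq_or_eq_of_mul_mul_inv_eq_of_notMem hF hconj hZ h₄ h₁ h₂ hz' hz heq.symm
        (heq ▸ hne)
      exacts [Or.inl h.symm, Or.inr (Or.inr (Or.inr h.symm))]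
    by_cases ht₄ : w₄ = t
    · subst ht₄
      obtain h | h := eq_or_eq_of_mul_mul_inv_eq_of_notMem hF hconj hZ h₃ h₂ h₁ (hZ z' hz')
        (hZ z hz) hinv.symm (hinv ▸ hinv_ne)
      exacts [Or.inr (Or.inl h.symm), Or.inr (Or.inr (Or.inl h.symm))]
    exact hW.eq_or_eq_of_mul_mul_inv_eq w₁ ((Finset.mem_insert.mp h₁).resolve_left ht₁) w₂
      ((Finset.mem_insert.mp h₂).resolve_left ht₂) w₃ ((Finset.mem_insert.mp h₃).resolve_left ht₃)
      w₄ ((Finset.mem_insert.mp h₄).resolve_left ht₄) z hz z' hz' heq hne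

/-- Any two representations of `u ≠ 1` as `w * z * w'⁻¹` share an element of `W`, so the two
elements of one representation meet all of them. -/
theorem exists_subset_card_eq_forall_eq_one (hW : IsGenericFor Z W) {L : ℕ}
    (hcard : W.card = L + 2) (u : G) :
    ∃ K ⊆ W, K.card = L ∧ ∀ w ∈ K, ∀ w' ∈ K, ∀ z ∈ Z, w * z * w'⁻¹ = u → u = 1 := by
  have hB : ∃ B : Finset G, B.card ≤ 2 ∧
      ∀ w ∈ W, ∀ w' ∈ W, w ∉ B → w' ∉ B → ∀ z ∈ Z, w * z * w'⁻¹ = u → u = 1 := by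
    by_cases hrep : ∃ w₁ ∈ W, ∃ w₂ ∈ W, ∃ z ∈ Z, w₁ * z * w₂⁻¹ = u ∧ u ≠ 1
    · obtain ⟨w₁, hw₁, w₂, hw₂, z, hz, rfl, hne⟩ := hrep
      refine ⟨{w₁, w₂}, Finset.card_le_two, fun w hw w' hw' hwB hw'B z' hz' heq => ?_⟩
      simp only [Finset.mem_insert, Finset.mem_singleton, not_or] at hwB hw'B
      rcases hW.eq_or_eq_of_mul_mul_inv_eq w₁ hw₁ w₂ hw₂ w hw w' hw' z hz z' hz' heq.symm hne
        with h | h | h | h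
      exacts [(hwB.1 h.symm).elim, (hw'B.2 h.symm).elim, (hw'B.1 h.symm).elim,
        (hwB.2 h.symm).elim]
    · push Not at hrep
      exact ⟨∅, by simp, fun w hw w' hw' _ _ z hz heq => hrep w hw w' hw' z hz heq⟩
  obtain ⟨B, hBcard, hB⟩ := hB
  obtain ⟨K, hKsub, hKcard⟩ := Finset.exists_subset_card_eq
    (show L ≤ (W \ B).card by have := Finset.le_card_sdiff B W; omega)
  refine ⟨K, hKsub.trans Finset.sdiff_subset, hKcard, fun w hw w' hw' => ?_⟩
  have hw := Finset.mem_sdiff.mp (hKsub hw)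
  have hw' := Finset.mem_sdiff.mp (hKsub hw')
  exact hB w hw.1 w' hw'.1 hw.2 hw'.2

end IsGenericFor

theorem IsICC.exists_isGenericFor_card [DecidableEq G] (hG : IsICC G) {Z : Finset G}
    (hZ : ∀ z ∈ Z, z⁻¹ ∈ Z) (n : ℕ) : ∃ W : Finset G, IsGenericFor Z W ∧ W.card = n := by
  induction n with
  | zero => exact ⟨∅, ⟨by simp, by simp⟩, rfl⟩
  | succ n ih =>
    obtain ⟨W, hW, hcard⟩ := ih
    obtain ⟨t, htF, htconj⟩ := hG.exists_notMem_forall_conj_ne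
      (W ∪ W * Z ∪ W * Z * W⁻¹ * W * Z) ({z ∈ Z | z ≠ 1} ×ˢ (W * Z * W⁻¹))
      fun p hp => (Finset.mem_filter.mp (Finset.mem_product.mp hp).1).2
    simp only [Finset.mem_union, not_or] at htF
    refine ⟨insert t W, hW.insert hZ htF.1.2 htF.2 fun z hz hz1 hmem => ?_, ?_⟩
    · exact htconj (z, t * z * t⁻¹)
        (Finset.mem_product.mpr ⟨Finset.mem_filter.mpr ⟨hz, hz1⟩, hmem⟩) rfl
    · rw [Finset.card_insert_of_notMem htF.1.1, hcard]

end Generic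

section Counting

open Finset

variable {α ι : Type*} [DecidableEq α]

theorem card_filter_forall_inter_ne_mul_le {O σ : ι → Finset α} {C : ℕ} (K : Finset ι)
    (hσ : ∀ k ∈ K, σ k ⊆ O k) (hC : ∀ k ∈ K, (O k).card = C)
    (hdisj : (K : Set ι).PairwiseDisjoint O) (Λ : Finset α) (hO : ∀ k ∈ K, O k ⊆ Λ) :
    #{T ∈ Λ.powerset | ∀ k ∈ K, T ∩ O k ≠ σ k} * 2 ^ (C * #K) ≤ (2 ^ C - 1) ^ #K * 2 ^ #Λ := by
  classical
  induction K using Finset.induction_on generalizing Λ with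
  | empty => simp [card_powerset]
  | insert j K hj ih =>
    simp only [mem_insert, forall_eq_or_imp] at hσ hC hO
    have hdisj' : ∀ k ∈ K, Disjoint (O j) (O k) := fun k hk =>
      hdisj (by simp) (by simp [hk]) (fun h => hj (h ▸ hk))
    have hIH := ih hσ.2 hC.2 (hdisj.subset (by simp)) (Λ \ O j)
      fun k hk => subset_sdiff.mpr ⟨hO.2 k hk, (hdisj' k hk).symm⟩
    have hsplit : #{T ∈ Λ.powerset | ∀ k ∈ insert j K, T ∩ O k ≠ σ k} ≤
        (2 ^ C - 1) * #{T ∈ (Λ \ O j).powerset | ∀ k ∈ K, T ∩ O k ≠ σ k} := by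
      rw [← hC.1, ← card_powerset, ← card_erase_of_mem (mem_powerset.mpr hσ.1),
        ← card_product]
      refine card_le_card_of_injOn (fun T => (T ∩ O j, T \ O j)) ?_ ?_
      · intro T hT
        simp only [coe_filter, Set.mem_ofPred_eq, mem_powerset,
          mem_insert, forall_eq_or_imp] at hT
        simp only [coe_product, Set.mem_prod, mem_coe, mem_erase,
          mem_filter, mem_powerset]
        refine ⟨⟨hT.2.1, inter_subset_right⟩, sdiff_subset_sdiff hT.1 le_rfl,
          fun k hk => ?_⟩
        rw [sdiff_inter_right_comm, sdiff_eq_self_of_disjoint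
          ((hdisj' k hk).symm.mono_left inter_subset_right)]
        exact hT.2.2 k hk
      · intro T _ T' _ h
        simp only [Prod.mk.injEq] at h
        rw [← sup_inf_sdiff T (O j), ← sup_inf_sdiff T' (O j)]
        exact congrArg₂ (· ⊔ ·) h.1 h.2
    have hcard : #(Λ \ O j) + C = #Λ := hC.1 ▸ card_sdiff_add_card_eq_card hO.1
    calc #{T ∈ Λ.powerset | ∀ k ∈ insert j K, T ∩ O k ≠ σ k} * 2 ^ (C * #(insert j K))
        ≤ (2 ^ C - 1) * #{T ∈ (Λ \ O j).powerset | ∀ k ∈ K, T ∩ O k ≠ σ k} *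
            (2 ^ (C * #K) * 2 ^ C) := by
          rw [card_insert_of_notMem hj, mul_add_one, pow_add]; gcongr
      _ = (2 ^ C - 1) * (#{T ∈ (Λ \ O j).powerset | ∀ k ∈ K, T ∩ O k ≠ σ k} * 2 ^ (C * #K)) *
            2 ^ C := by ring
      _ ≤ (2 ^ C - 1) * ((2 ^ C - 1) ^ #K * 2 ^ #(Λ \ O j)) * 2 ^ C := by gcongr
      _ = (2 ^ C - 1) ^ #(insert j K) * 2 ^ #Λ := by
          rw [card_insert_of_notMem hj, ← hcard, pow_add, pow_succ]; ring

theorem exists_subset_forall_exists_inter_eq {κ : Type*} {K : ι → Finset κ}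
    {O σ : ι → κ → Finset α} {C L : ℕ} (I : Finset ι) (Λ : Finset α)
    (hσ : ∀ i ∈ I, ∀ k ∈ K i, σ i k ⊆ O i k) (hC : ∀ i ∈ I, ∀ k ∈ K i, #(O i k) = C)
    (hdisj : ∀ i ∈ I, (K i : Set κ).PairwiseDisjoint (O i))
    (hO : ∀ i ∈ I, ∀ k ∈ K i, O i k ⊆ Λ) (hK : ∀ i ∈ I, #(K i) = L)
    (hI : #I * (2 ^ C - 1) ^ L < 2 ^ (C * L)) :
    ∃ T ⊆ Λ, ∀ i ∈ I, ∃ k ∈ K i, T ∩ O i k = σ i k := by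
  set bad := I.biUnion fun i => {T ∈ Λ.powerset | ∀ k ∈ K i, T ∩ O i k ≠ σ i k}
  have hbad : #bad * 2 ^ (C * L) < 2 ^ #Λ * 2 ^ (C * L) :=
    calc #bad * 2 ^ (C * L)
        ≤ ∑ i ∈ I, #{T ∈ Λ.powerset | ∀ k ∈ K i, T ∩ O i k ≠ σ i k} * 2 ^ (C * L) := by
          rw [← sum_mul]; gcongr; exact card_biUnion_le
      _ ≤ ∑ _i ∈ I, (2 ^ C - 1) ^ L * 2 ^ #Λ := sum_le_sum fun i hi => hK i hi ▸
          card_filter_forall_inter_ne_mul_le (K i) (hσ i hi) (hC i hi) (hdisj i hi) Λ (hO i hi)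
      _ = #I * (2 ^ C - 1) ^ L * 2 ^ #Λ := by rw [sum_const, smul_eq_mul, mul_assoc]
      _ < 2 ^ (C * L) * 2 ^ #Λ := by gcongr
      _ = 2 ^ #Λ * 2 ^ (C * L) := mul_comm _ _
  obtain ⟨T, hT, hTbad⟩ := exists_mem_notMem_of_card_lt_card (s := bad) (t := Λ.powerset)
    (by rw [card_powerset]; exact lt_of_mul_lt_mul_right hbad (Nat.zero_le _))
  refine ⟨T, mem_powerset.mp hT, fun i hi => ?_⟩
  by_contra! h
  exact hTbad (mem_biUnion.mpr ⟨i, hi, mem_filter.mpr ⟨hT, h⟩⟩)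

end Counting

open Filter Asymptotics in
theorem eventually_pow_mul_pow_lt_pow (a b k q : ℕ) :
    ∀ᶠ n : ℕ in atTop, (a + b * n) ^ k * q ^ n < (q + 1) ^ n := by
  have ho : (fun n : ℕ => ((a + b : ℕ) : ℝ) ^ k * ((n : ℝ) ^ k * (q : ℝ) ^ n)) =o[atTop]
      fun n => ((q : ℝ) + 1) ^ n :=
    (isLittleO_pow_const_mul_const_pow_const_pow_of_norm_lt k (by simp)).const_mul_left _
  filter_upwards [ho.def (by norm_num : (0 : ℝ) < 1 / 2), eventually_ge_atTop 1] with n hn hn1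
  have hlin : a + b * n ≤ (a + b) * n := by nlinarith
  have hpos : (0 : ℝ) < ((q : ℝ) + 1) ^ n := by positivity
  rw [Real.norm_of_nonneg (by positivity), Real.norm_of_nonneg hpos.le] at hn
  have : (((a + b * n) ^ k * q ^ n : ℕ) : ℝ) < (((q + 1) ^ n : ℕ) : ℝ) :=
    calc (((a + b * n) ^ k * q ^ n : ℕ) : ℝ)
        ≤ (((a + b) * n) ^ k * q ^ n : ℕ) := by gcongr
      _ = ((a + b : ℕ) : ℝ) ^ k * ((n : ℝ) ^ k * (q : ℝ) ^ n) := by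
          rw [mul_pow]; push_cast; ring
      _ ≤ 1 / 2 * ((q : ℝ) + 1) ^ n := hn
      _ < (((q + 1) ^ n : ℕ) : ℝ) := by push_cast; linarith
  exact_mod_cast this

section Configuration

open Finset

variable {G : Type*} [Group G] [DecidableEq G] {X : Finset G}

theorem inv_mem_mul_inv {z : G} (hz : z ∈ X * X⁻¹) : z⁻¹ ∈ X * X⁻¹ := by
  obtain ⟨x, hx, y, hy, rfl⟩ := mem_mul.mp hz
  simpa using mul_mem_mul (mem_inv'.mp hy) (inv_mem_inv hx)

theorem inv_mem_union_inv {y : G} (hy : y ∈ X ∪ X⁻¹) : y⁻¹ ∈ X ∪ X⁻¹ := by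
  simp only [mem_union, mem_inv', inv_inv] at hy ⊢
  exact hy.symm

theorem card_union_inv_le (X : Finset G) : #(X ∪ X⁻¹) ≤ 2 * #X :=
  (card_union_le _ _).trans (by rw [card_inv, two_mul])

def isolatedPoints (X T : Finset G) : Finset G :=
  {p ∈ T | ∀ x ∈ X, x ≠ 1 → p * x ∉ T}

theorem xApart_of_mem_isolatedPoints {T : Finset G} {a b : G} (ha : a ∈ isolatedPoints X T)
    (hb : b ∈ isolatedPoints X T) (hab : a ≠ b) : XApart X a b := by
  intro hX
  refine (mem_filter.mp ha).2 _ hX (fun h => hab (inv_mul_eq_one.mp h)) ?_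
  rw [mul_inv_cancel_left]
  exact (mem_filter.mp hb).1

theorem mem_isolatedPoints_of_inter_eq {T : Finset G} {a b : G}
    (hT : T ∩ (a • X ∪ b • X) = {a, b}) (hab : ∀ x ∈ X, x ≠ 1 → a * x ≠ b) :
    a ∈ isolatedPoints X T := by
  have ha : a ∈ T ∩ (a • X ∪ b • X) := hT ▸ mem_insert_self a {b}
  refine mem_filter.mpr ⟨(mem_inter.mp ha).1, fun x hx hx1 hxT => ?_⟩
  have hax : a * x ∈ ({a, b} : Finset G) :=
    hT ▸ mem_inter.mpr ⟨hxT, mem_union_left _ (smul_mem_smul_finset hx)⟩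
  rcases mem_insert.mp hax with h | h
  · exact hx1 (mul_eq_left.mp h)
  · exact hab x hx hx1 (mem_singleton.mp h)

theorem disjoint_mul_smul_finset {g h w w' : G} (hne : ∀ z ∈ X * X⁻¹, w * z * w'⁻¹ ≠ g⁻¹ * h) :
    Disjoint ((g * w) • X) ((h * w') • X) := by
  rw [disjoint_left]
  intro _ hmem' hmem
  obtain ⟨x, hx, rfl⟩ := mem_smul_finset.mp hmem'
  obtain ⟨y, hy, hxy⟩ := mem_smul_finset.mp hmem
  refine hne (x * y⁻¹) (mul_mem_mul hx (inv_mem_inv hy)) ?_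
  simp only [smul_eq_mul] at hxy
  calc w * (x * y⁻¹) * w'⁻¹ = g⁻¹ * ((g * w) * x) * y⁻¹ * w'⁻¹ := by group
    _ = g⁻¹ * h := by rw [← hxy]; group

def pairBlock (X : Finset G) (g h w : G) : Finset G := (g * w) • X ∪ (h * w) • X

theorem card_pairBlock {g h w : G} (hne : ∀ z ∈ X * X⁻¹, w * z * w⁻¹ ≠ g⁻¹ * h) :
    #(pairBlock X g h w) = 2 * #X := by
  rw [pairBlock, card_union_of_disjoint (disjoint_mul_smul_finset hne), card_smul_finset,
    card_smul_finset, two_mul]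

theorem pairBlock_subset_mul_mul {P W : Finset G} {g h w : G} (hg : g ∈ P) (hh : h ∈ P)
    (hw : w ∈ W) : pairBlock X g h w ⊆ P * W * X := by
  refine union_subset ?_ ?_ <;> intro _ hmem <;> obtain ⟨x, hx, rfl⟩ := mem_smul_finset.mp hmem
  exacts [mul_mem_mul (mul_mem_mul hg hw) hx, mul_mem_mul (mul_mem_mul hh hw) hx]

theorem IsGenericFor.pairwiseDisjoint_pairBlock {W K : Finset G} (hW : IsGenericFor (X * X⁻¹) W)
    (hKW : K ⊆ W) {g h : G} (hne : ∀ w ∈ K, ∀ w' ∈ K, ∀ z ∈ X * X⁻¹, w * z * w'⁻¹ ≠ g⁻¹ * h) :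
    (K : Set G).PairwiseDisjoint (pairBlock X g h) := by
  intro w hw w' hw' hww'
  have hsame (a : G) : Disjoint ((a * w) • X) ((a * w') • X) :=
    disjoint_mul_smul_finset fun z hz heq => hww' <|
      hW.eq_of_mul_mul_inv_eq_one w (hKW hw) w' (hKW hw') z hz (by rw [heq, inv_mul_cancel])
  simp only [Function.onFun, pairBlock, disjoint_union_left, disjoint_union_right]
  exact ⟨⟨hsame g, (disjoint_mul_smul_finset (hne w' hw' w hw)).symm⟩,
    ⟨disjoint_mul_smul_finset (hne w hw w' hw'), hsame h⟩⟩

theorem IsGenericFor.exists_forall_mul_mem_isolatedPoints {W : Finset G} (hX : 1 ∈ X)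
    (hW : IsGenericFor (X * X⁻¹) W) {L : ℕ} (hWcard : #W = L + 2) {P : Finset G}
    (hWP : W ⊆ P) (hbound : #P ^ 2 * (2 ^ (2 * #X) - 1) ^ L < 2 ^ (2 * #X * L)) :
    ∃ T : Finset G, ∀ g ∈ P, ∀ h ∈ P,
      ∃ w ∈ W, g * w ∈ isolatedPoints X T ∧ h * w ∈ isolatedPoints X T := by
  choose K hKW hKcard hK using hW.exists_subset_card_eq_forall_eq_one hWcard
  have hmem (a : G) : a ∈ a • X := by simpa using smul_mem_smul_finset (a := a) hX
  have hgood : ∀ p ∈ P.offDiag, ∀ w ∈ K (p.1⁻¹ * p.2), ∀ w' ∈ K (p.1⁻¹ * p.2),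
      ∀ z ∈ X * X⁻¹, w * z * w'⁻¹ ≠ p.1⁻¹ * p.2 := fun p hp w hw w' hw' z hz heq =>
    (mem_offDiag.mp hp).2.2 (inv_mul_eq_one.mp (hK _ w hw w' hw' z hz heq))
  obtain ⟨T, -, hT⟩ := exists_subset_forall_exists_inter_eq (K := fun p => K (p.1⁻¹ * p.2))
    (O := fun p => pairBlock X p.1 p.2) (σ := fun p w => {p.1 * w, p.2 * w}) P.offDiag
    (P * W * X)
    (fun p _ w _ => insert_subset (mem_union_left _ (hmem _))
      (singleton_subset_iff.mpr (mem_union_right _ (hmem _))))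
    (fun p hp w hw => card_pairBlock (hgood p hp w hw w hw))
    (fun p hp => hW.pairwiseDisjoint_pairBlock (hKW _) (hgood p hp))
    (fun p hp w hw => pairBlock_subset_mul_mul (mem_offDiag.mp hp).1 (mem_offDiag.mp hp).2.1
      (hKW _ hw))
    (fun p _ => hKcard _)
    (lt_of_le_of_lt (by gcongr; rw [offDiag_card, sq]; exact Nat.sub_le _ _) hbound)
  suffices hne : ∀ g ∈ P, ∀ h ∈ P, g ≠ h →
      ∃ w ∈ W, g * w ∈ isolatedPoints X T ∧ h * w ∈ isolatedPoints X T by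
    refine ⟨T, fun g hg h hh => ?_⟩
    by_cases hgh : g = h
    · obtain ⟨h', hh', hh'g⟩ := exists_mem_ne ((by omega : 1 < #W).trans_le (card_le_card hWP)) g
      obtain ⟨w, hw, hgw, -⟩ := hne g hg h' hh' hh'g.symm
      exact ⟨w, hw, hgw, hgh ▸ hgw⟩
    · exact hne g hg h hh hgh
  intro g hg h hh hgh
  have hp : (g, h) ∈ P.offDiag := mem_offDiag.mpr ⟨hg, hh, hgh⟩
  obtain ⟨w, hwK, hTw⟩ := hT (g, h) hp
  have hgw : ∀ z ∈ X * X⁻¹, w * z * w⁻¹ ≠ g⁻¹ * h := hgood (g, h) hp w hwK w hwK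
  refine ⟨w, hKW _ hwK, mem_isolatedPoints_of_inter_eq hTw fun x hx _ heq => ?_,
    mem_isolatedPoints_of_inter_eq (by rwa [union_comm, pair_comm]) fun x hx _ heq => ?_⟩
  · refine hgw (x * 1⁻¹) (mul_mem_mul hx (inv_mem_inv hX)) ?_
    rw [show h = g * w * x * w⁻¹ by rw [heq]; group]; group
  · refine hgw (1 * x⁻¹) (mul_mem_mul hX (inv_mem_inv hx)) ?_
    rw [show g = h * w * x * w⁻¹ by rw [heq]; group]; group

end Configuration

theorem exists_finite_witness_configuration_general
    (G : Type) [Group G] [DecidableEq G] (hICC : IsICC G)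
    (X : Finset G) (hXone : (1 : G) ∈ X) :
    ∃ (s : G → Fin 2) (Y : Finset G),
      X ⊆ Y ∧ (∀ y ∈ Y, y⁻¹ ∈ Y) ∧
      (∀ a b : G, s a = 1 → s b = 1 → a ≠ b → XApart X a b) ∧
      (∀ g ∈ Y ^ (100 : ℕ), ∀ h ∈ Y ^ (100 : ℕ),
        ∃ a ∈ Y, s (g * a) = 1 ∧ s (h * a) = 1) := by
  set q := 2 ^ (2 * X.card) - 1
  obtain ⟨L, hL⟩ := (eventually_pow_mul_pow_lt_pow (2 * X.card + 4) 2 200 q).exists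
  obtain ⟨W, hW, hWcard⟩ := hICC.exists_isGenericFor_card (fun _ => inv_mem_mul_inv) (L + 2)
  set Y := X ∪ W ∪ (X ∪ W)⁻¹
  -- Hypotheses `g ∈ Y ^ 100` exceed the recursion limit (the power gets unfolded), so we name it.
  obtain ⟨P, hP⟩ : ∃ P, P = Y ^ (100 : ℕ) := ⟨_, rfl⟩
  have hWY : W ⊆ Y := Finset.subset_union_right.trans Finset.subset_union_left
  have hbound : P.card ^ 2 * q ^ L < 2 ^ (2 * X.card * L) :=
    calc P.card ^ 2 * q ^ L ≤ (2 * X.card + 4 + 2 * L) ^ 200 * q ^ L := by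
          rw [hP, show 200 = 100 * 2 by rfl, pow_mul]
          gcongr
          refine Finset.card_pow_le.trans (Nat.pow_le_pow_left ((card_union_inv_le _).trans ?_) _)
          have := Finset.card_union_le X W
          omega
      _ < (q + 1) ^ L := hL
      _ = 2 ^ (2 * X.card * L) := by rw [Nat.sub_add_cancel Nat.one_le_two_pow, ← pow_mul]
  obtain ⟨T, hT⟩ := hW.exists_forall_mul_mem_isolatedPoints hXone hWcard
    (hP ▸ hWY.trans (Finset.subset_pow (by simp [Y, hXone]) (by norm_num))) hbound
  refine ⟨fun p => if p ∈ isolatedPoints X T then 1 else 0, Y,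
    Finset.subset_union_left.trans Finset.subset_union_left, fun _ => inv_mem_union_inv,
    fun a b ha hb => xApart_of_mem_isolatedPoints (by simpa using ha) (by simpa using hb),
    hP ▸ fun g hg h hh => ?_⟩
  obtain ⟨w, hw, hgw, hhw⟩ := hT g hg h hh
  exact ⟨w, hWY hw, by simp [hgw], by simp [hhw]⟩

/-- Let `G` be a countable ICC group and `X ⊆ G` a finite symmetric subset containing the
identity with `|X| ≥ 2`.  Then there exist a configuration `s ∈ 2^G` and a finite symmetric
`Y ⊇ X` such that (1) distinct `a, b` with `s a = s b = 1` are `X`-apart, and (2) for every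
`g, h ∈ Y^100` there is `a ∈ Y` with `s (g * a) = s (h * a) = 1`. -/
theorem exists_finite_witness_configuration
    (G : Type) [Group G] [Countable G] [DecidableEq G] (hICC : IsICC G)
    (X : Finset G) (hXsym : ∀ x ∈ X, x⁻¹ ∈ X) (hXone : (1 : G) ∈ X)
    (hXcard : 2 ≤ X.card) :
    ∃ (s : G → Fin 2) (Y : Finset G),
      X ⊆ Y ∧ (∀ y ∈ Y, y⁻¹ ∈ Y) ∧
      (∀ a b : G, s a = 1 → s b = 1 → a ≠ b → XApart X a b) ∧
      (∀ g ∈ Y ^ (100 : ℕ), ∀ h ∈ Y ^ (100 : ℕ),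
        ∃ a ∈ Y, s (g * a) = 1 ∧ s (h * a) = 1) :=
  exists_finite_witness_configuration_general G hICC X hXone
end

section
/- Let G be a countable ICC group and let X ⊆ G be a finite symmetric subset containing the identity with |X| ≥ 2. Then there exists a finite symmetric subset Y ⊆ G with X ⊆ Y such that: (1) |Y|^200 · (1 − |X|⁻²)^(|Y|/(10|X²|+5)) < 1; and (2) for any distinct g, h ∈ G there exists a subset Y_{g,h} ⊆ Y with |Y_{g,h}| ≥ |Y|/(10|X²|+5) such that for all y₁, y₂ ∈ Y_{g,h}, the elements g·y₁ and h·y₂ are X²-apart. -/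
open scoped Pointwise

/-!
Centralisers of non-identity elements of an ICC group have infinite index, so by B. H. Neumann's
coset-covering lemma one can choose, one element at a time, an arbitrarily large `Z ⊆ G` such that
every `s ≠ 1` is conjugated into `Q = X²` by at most one element of `Z`; take `Y = X ∪ Z ∪ Z⁻¹`.
For `g ≠ h` put `s = g⁻¹h`. After discarding the at most one `z ∈ Z` with `z⁻¹sz ∈ Q`, the graph
`y₁ ~ y₂ ⟺ y₁⁻¹sy₂ ∈ Q` on the rest of `Z` has degrees at most `2|Q|`, and a greedy independent
set in it is the required `Y_{g,h}`. Condition (1) holds as soon as `|Z|` is large, since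
`|Y|²⁰⁰` grows polynomially while the second factor decays exponentially in `|Y|`.
-/

open Filter Topology

theorem SimpleGraph.exists_isIndepSet_subset_card_le_mul {V : Type*} (G : SimpleGraph V)
    [DecidableRel G.Adj] (d : ℕ) (A : Finset V) (hdeg : ∀ a ∈ A, {b ∈ A | G.Adj a b}.card ≤ d) :
    ∃ W ⊆ A, G.IsIndepSet W ∧ A.card ≤ W.card * (d + 1) := by
  classical
  induction A using Finset.strongInduction with
  | H A ih =>
    obtain rfl | ⟨a, ha⟩ := A.eq_empty_or_nonempty
    · exact ⟨∅, subset_rfl, by simp [SimpleGraph.IsIndepSet], by simp⟩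
    set N := insert a {b ∈ A | G.Adj a b}
    have hNA : N ⊆ A := Finset.insert_subset ha (Finset.filter_subset _ _)
    obtain ⟨W, hWA, hW, hcard⟩ := ih (A \ N) (Finset.sdiff_ssubset hNA (Finset.insert_nonempty _ _))
      fun b hb => (Finset.card_le_card (Finset.filter_subset_filter _ Finset.sdiff_subset)).trans
        (hdeg b (Finset.mem_sdiff.1 hb).1)
    have hfar : ∀ b ∈ W, b ∉ N := fun b hb => (Finset.mem_sdiff.1 (hWA hb)).2
    have haW : a ∉ W := fun h => hfar a h (Finset.mem_insert_self _ _)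
    refine ⟨insert a W, Finset.insert_subset ha (hWA.trans Finset.sdiff_subset), ?_, ?_⟩
    · rw [Finset.coe_insert, SimpleGraph.IsIndepSet, Set.pairwise_insert]
      refine ⟨hW, fun b hb _ => ?_⟩
      have hab : ¬ G.Adj a b := fun h => hfar b hb
        (Finset.mem_insert_of_mem (Finset.mem_filter.2 ⟨(Finset.mem_sdiff.1 (hWA hb)).1, h⟩))
      exact ⟨hab, fun h => hab h.symm⟩
    · calc A.card ≤ (A \ N).card + N.card := Finset.card_le_card_sdiff_add_card
        _ ≤ W.card * (d + 1) + (d + 1) :=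
            add_le_add hcard
              ((Finset.card_insert_le _ _).trans (Nat.add_le_add_right (hdeg a ha) 1))
        _ = (insert a W).card * (d + 1) := by rw [Finset.card_insert_of_notMem haW]; ring

theorem tendsto_pow_mul_rpow_div_atTop_nhds_zero (n : ℕ) {r c : ℝ} (hr₀ : 0 < r) (hr₁ : r < 1)
    (hc : 0 < c) : Tendsto (fun x : ℝ => x ^ n * r ^ (x / c)) atTop (𝓝 0) := by
  have hb : 0 < -Real.log r / c := div_pos (neg_pos.2 (Real.log_neg hr₀ hr₁)) hc
  refine (tendsto_rpow_mul_exp_neg_mul_atTop_nhds_zero n _ hb).congr fun x => ?_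
  rw [Real.rpow_natCast, Real.rpow_def_of_pos hr₀]
  congr 2
  field_simp

theorem eventually_pow_mul_one_sub_inv_sq_rpow_div_lt_one (k : ℕ) {n c : ℝ} (hn : 1 < n)
    (hc : 0 < c) : ∀ᶠ x in atTop, x ^ k * (1 - (n ^ 2)⁻¹) ^ (x / c) < 1 := by
  have hinv : (n ^ 2)⁻¹ < 1 := inv_lt_one_of_one_lt₀ (one_lt_pow₀ hn two_ne_zero)
  have hpos : 0 < (n ^ 2)⁻¹ := by positivity
  exact (tendsto_pow_mul_rpow_div_atTop_nhds_zero k (by linarith) (by linarith) hc)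
    |>.eventually_lt_const one_pos

section ConjugationAvoidance

variable {G : Type*} [Group G]

theorem not_finiteIndex_centralizer_of_infinite {s : G} (hs : {h : G | IsConj s h}.Infinite) :
    ¬ (Subgroup.centralizer {s}).FiniteIndex := by
  intro hfin
  have hidx : (Subgroup.centralizer {s}).index = (MulAction.orbit (ConjAct G) s).ncard := by
    rw [← MulAction.index_stabilizer, Subgroup.centralizer_eq_comap_stabilizer]
    exact Subgroup.index_comap_of_surjective _ ConjAct.toConjAct.surjective
  have := hfin.index_ne_zero
  rw [hidx] at this
  refine hs ((Set.finite_of_ncard_ne_zero this).subset fun h hh => ?_)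
  exact ConjAct.mem_orbit_conjAct.2 hh.symm

theorem exists_conjugators_subset_leftCoset (s u : G) :
    ∃ c : G, {w : G | w⁻¹ * s * w = u} ⊆ c • (Subgroup.centralizer {u} : Set G) := by
  by_cases h : ∃ c : G, c⁻¹ * s * c = u
  · obtain ⟨c, hc⟩ := h
    refine ⟨c, fun w hw => ?_⟩
    rw [mem_leftCoset_iff, SetLike.mem_coe, Subgroup.mem_centralizer_singleton_iff]
    nth_rewrite 1 [← (hw : w⁻¹ * s * w = u)]
    rw [← hc]
    group
  · exact ⟨1, fun w hw => (h ⟨w, hw⟩).elim⟩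

theorem exists_notMem_leftCoset_of_not_finiteIndex {ι : Type*} (I : Finset ι) (g : ι → G)
    (H : ι → Subgroup G) (hH : ∀ i ∈ I, ¬ (H i).FiniteIndex) :
    ∃ x : G, ∀ i ∈ I, x ∉ g i • (H i : Set G) := by
  by_contra! hcover
  obtain ⟨i, hi, hfin⟩ := Subgroup.exists_finiteIndex_of_leftCoset_cover
    (Set.eq_univ_of_forall fun x => Set.mem_iUnion₂.2 (by simpa using hcover x))
  exact hH i hi hfin

theorem inv_mul_mul_ne_one {s : G} (hs : s ≠ 1) (a : G) : a⁻¹ * s * a ≠ 1 := by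
  simpa [inv_inv] using (conj_eq_one_iff (a := a⁻¹) (b := s)).not.2 hs

variable (hC : ∀ s : G, s ≠ 1 → ¬ (Subgroup.centralizer {s}).FiniteIndex)
include hC

theorem exists_forall_conj_mem_imp_conj_notMem (Q Z : Finset G) :
    ∃ z : G, ∀ a ∈ Z, ∀ s ≠ 1, a⁻¹ * s * a ∈ Q → z⁻¹ * s * z ∉ Q := by
  classical
  let Q' := Q.filter (· ≠ 1)
  choose c hc using exists_conjugators_subset_leftCoset (G := G)
  -- A bad `z` solves `z⁻¹ * (a * t * a⁻¹) * z = u` with `a ∈ Z`, `t = a⁻¹ * s * a ∈ Q'` and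
  -- `u = z⁻¹ * s * z ∈ Q'`, so it lies in a left coset of the centralizer of `u ≠ 1`.
  obtain ⟨z, hz⟩ := exists_notMem_leftCoset_of_not_finiteIndex (Z ×ˢ Q' ×ˢ Q')
    (fun i => c (i.1 * i.2.1 * i.1⁻¹) i.2.2) (fun i => Subgroup.centralizer {i.2.2})
    fun i hi => hC _ (Finset.mem_filter.1 (Finset.mem_product.1 (Finset.mem_product.1 hi).2).2).2
  refine ⟨z, fun a ha s hs hsa hsz => hz (a, a⁻¹ * s * a, z⁻¹ * s * z) ?_ (hc _ _ ?_)⟩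
  · simp [Q', ha, hsa, hsz, inv_mul_mul_ne_one hs]
  · show z⁻¹ * (a * (a⁻¹ * s * a) * a⁻¹) * z = z⁻¹ * s * z
    group

theorem exists_card_eq_forall_conj_mem_eq (Q : Finset G) (hQ : ∃ t ∈ Q, t ≠ 1) (m : ℕ) :
    ∃ Z : Finset G, Z.card = m ∧
      ∀ s ≠ 1, ∀ a ∈ Z, ∀ b ∈ Z, a⁻¹ * s * a ∈ Q → b⁻¹ * s * b ∈ Q → a = b := by
  classical
  induction m with
  | zero => exact ⟨∅, rfl, by simp⟩
  | succ m ih =>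
    obtain ⟨Z, rfl, hZ⟩ := ih
    obtain ⟨z, hz⟩ := exists_forall_conj_mem_imp_conj_notMem hC Q Z
    obtain ⟨t, htQ, ht⟩ := hQ
    have htz : z⁻¹ * (z * t * z⁻¹) * z ∈ Q := by simpa [mul_assoc] using htQ
    have hzZ : z ∉ Z := fun h => hz z h (z * t * z⁻¹) (by simpa using ht) htz htz
    refine ⟨insert z Z, Finset.card_insert_of_notMem hzZ, fun s hs a ha b hb hsa hsb => ?_⟩
    rcases Finset.mem_insert.1 ha with rfl | ha' <;> rcases Finset.mem_insert.1 hb with rfl | hb'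
    · rfl
    · exact (hz b hb' s hs hsb hsa).elim
    · exact (hz a ha' s hs hsa hsb).elim
    · exact hZ s hs a ha' b hb' hsa hsb

end ConjugationAvoidance

section Separation

variable {G : Type*} [Group G]

open Classical in
theorem card_filter_fromRel_conj_adj_le (Q A : Finset G) (s a : G) :
    {b ∈ A | (SimpleGraph.fromRel fun x y : G => x⁻¹ * s * y ∈ Q).Adj a b}.card ≤ 2 * Q.card := by
  calc _ ≤ ({b ∈ A | a⁻¹ * s * b ∈ Q} ∪ {b ∈ A | b⁻¹ * s * a ∈ Q}).card := by
        refine Finset.card_le_card fun b hb => ?_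
        simp only [Finset.mem_filter, Finset.mem_union, SimpleGraph.fromRel_adj] at hb ⊢
        tauto
    _ ≤ Q.card + Q.card := by
        refine (Finset.card_union_le _ _).trans (add_le_add ?_ ?_)
        · exact Finset.card_le_card_of_injOn (a⁻¹ * s * ·) (fun b hb => (Finset.mem_filter.1 hb).2)
            fun b₁ _ b₂ _ h => mul_left_cancel h
        · exact Finset.card_le_card_of_injOn (·⁻¹ * s * a) (fun b hb => (Finset.mem_filter.1 hb).2)
            fun b₁ _ b₂ _ h => inv_injective (mul_right_cancel (mul_right_cancel h))
    _ = 2 * Q.card := (two_mul _).symm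

theorem exists_subset_card_le_mul_forall_conj_notMem (Q Z : Finset G) (s : G)
    (hZ : ∀ a ∈ Z, ∀ b ∈ Z, a⁻¹ * s * a ∈ Q → b⁻¹ * s * b ∈ Q → a = b) :
    ∃ W ⊆ Z, Z.card ≤ W.card * (2 * Q.card + 1) + 1 ∧
      ∀ y₁ ∈ W, ∀ y₂ ∈ W, y₁⁻¹ * s * y₂ ∉ Q := by
  classical
  have hA : Z.card ≤ {z ∈ Z | z⁻¹ * s * z ∉ Q}.card + 1 := by
    have hbad : {z ∈ Z | z⁻¹ * s * z ∈ Q}.card ≤ 1 := Finset.card_le_one.2 fun a ha b hb =>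
      hZ a (Finset.mem_filter.1 ha).1 b (Finset.mem_filter.1 hb).1 (Finset.mem_filter.1 ha).2
        (Finset.mem_filter.1 hb).2
    have := Finset.card_filter_add_card_filter_not (s := Z) (fun z => z⁻¹ * s * z ∈ Q)
    omega
  set A := {z ∈ Z | z⁻¹ * s * z ∉ Q}
  obtain ⟨W, hWA, hW, hcard⟩ := (SimpleGraph.fromRel fun x y : G => x⁻¹ * s * y ∈ Q)
    |>.exists_isIndepSet_subset_card_le_mul (2 * Q.card) A
      fun a _ => card_filter_fromRel_conj_adj_le Q A s a
  refine ⟨W, hWA.trans (Finset.filter_subset _ _), by omega, fun y₁ h₁ y₂ h₂ h => ?_⟩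
  by_cases heq : y₁ = y₂
  · subst heq
    exact (Finset.mem_filter.1 (hWA h₁)).2 h
  · exact hW h₁ h₂ heq ((SimpleGraph.fromRel_adj _ _ _).2 ⟨heq, Or.inl h⟩)

end Separation

theorem Finset.exists_symmetric_superset_card_le {G : Type*} [Group G] [DecidableEq G]
    (X Z : Finset G) (hX : ∀ x ∈ X, x⁻¹ ∈ X) :
    ∃ Y : Finset G, X ⊆ Y ∧ Z ⊆ Y ∧ (∀ y ∈ Y, y⁻¹ ∈ Y) ∧ Y.card ≤ X.card + 2 * Z.card := by
  refine ⟨X ∪ Z ∪ Z⁻¹, subset_union_left.trans subset_union_left,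
    subset_union_right.trans subset_union_left, fun y hy => ?_, ?_⟩
  · have := hX y
    simp only [mem_union, mem_inv', inv_inv] at hy ⊢
    tauto
  · calc _ ≤ (X ∪ Z).card + Z⁻¹.card := card_union_le _ _
      _ ≤ X.card + Z.card + Z.card := by
          rw [card_inv]; exact Nat.add_le_add_right (card_union_le _ _) _
      _ = X.card + 2 * Z.card := by ring


theorem exists_good_Y_general (G : Type) [Group G] [DecidableEq G] (hICC : IsICC G)
    (X : Finset G) (hXsym : ∀ x ∈ X, x⁻¹ ∈ X)
    (hXcard : 2 ≤ X.card) :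
    ∃ Y : Finset G, X ⊆ Y ∧ (∀ y ∈ Y, y⁻¹ ∈ Y) ∧
      (Y.card : ℝ) ^ (200 : ℕ) *
        (1 - ((X.card : ℝ) ^ (2 : ℕ))⁻¹) ^
          ((Y.card : ℝ) / (10 * ((X * X).card : ℝ) + 5)) < 1 ∧
      ∀ g h : G, g ≠ h →
        ∃ W : Finset G, W ⊆ Y ∧
          (Y.card : ℝ) / (10 * ((X * X).card : ℝ) + 5) ≤ (W.card : ℝ) ∧
          ∀ y₁ ∈ W, ∀ y₂ ∈ W, XApart (X * X) (g * y₁) (h * y₂) := by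
  have hC (s : G) (hs : s ≠ 1) := not_finiteIndex_centralizer_of_infinite (hICC.2 s hs)
  have hQ : ∃ t ∈ X * X, t ≠ 1 := by
    obtain ⟨a, ha, b, hb, hab⟩ := Finset.one_lt_card.1 hXcard
    exact ⟨a⁻¹ * b, Finset.mul_mem_mul (hXsym a ha) hb, by rwa [Ne, inv_mul_eq_one]⟩
  have hc : (0 : ℝ) < 10 * ((X * X).card : ℝ) + 5 := by positivity
  obtain ⟨M, hM⟩ := eventually_atTop.1 <|
    eventually_pow_mul_one_sub_inv_sq_rpow_div_lt_one 200 (Nat.one_lt_cast.2 hXcard) hc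
  obtain ⟨Z, hZcard, hZ⟩ :=
    exists_card_eq_forall_conj_mem_eq hC (X * X) hQ (max (X.card + 5) ⌈M⌉₊)
  obtain ⟨Y, hXY, hZY, hYsym, hYcard⟩ := Finset.exists_symmetric_superset_card_le X Z hXsym
  refine ⟨Y, hXY, hYsym, hM _ ?_, fun g h hgh => ?_⟩
  · calc M ≤ ⌈M⌉₊ := Nat.le_ceil M
      _ ≤ Y.card := by exact_mod_cast (le_max_right _ _).trans (hZcard ▸ Finset.card_le_card hZY)
  obtain ⟨W, hWZ, hWcard, hW⟩ := exists_subset_card_le_mul_forall_conj_notMem (X * X) Z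
    (g⁻¹ * h) (hZ _ (by rwa [Ne, inv_mul_eq_one]))
  refine ⟨W, hWZ.trans hZY, ?_, fun y₁ h₁ y₂ h₂ => ?_⟩
  · have : Y.card ≤ W.card * (10 * (X * X).card + 5) := by
      nlinarith [le_max_left (X.card + 5) ⌈M⌉₊]
    rw [div_le_iff₀ hc]
    exact_mod_cast this
  · rw [XApart, show (g * y₁)⁻¹ * (h * y₂) = y₁⁻¹ * (g⁻¹ * h) * y₂ by group]
    exact hW y₁ h₁ y₂ h₂

/-- Let `G` be a countable ICC group and `X ⊆ G` a finite symmetric subset containing the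
identity with `|X| ≥ 2`.  Then there is a finite symmetric `Y ⊇ X` with
`|Y|^200 (1 - |X|⁻²)^(|Y|/(10|X²|+5)) < 1`, such that for any distinct `g, h ∈ G` there is a
subset `Y_{g,h} ⊆ Y` of size at least `|Y|/(10|X²|+5)` with `g • y₁` and `h • y₂` being
`X²`-apart for all `y₁, y₂ ∈ Y_{g,h}`. -/
theorem exists_good_Y (G : Type) [Group G] [Countable G] [DecidableEq G] (hICC : IsICC G)
    (X : Finset G) (hXsym : ∀ x ∈ X, x⁻¹ ∈ X) (hXone : (1 : G) ∈ X)
    (hXcard : 2 ≤ X.card) :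
    ∃ Y : Finset G, X ⊆ Y ∧ (∀ y ∈ Y, y⁻¹ ∈ Y) ∧
      (Y.card : ℝ) ^ (200 : ℕ) *
        (1 - ((X.card : ℝ) ^ (2 : ℕ))⁻¹) ^
          ((Y.card : ℝ) / (10 * ((X * X).card : ℝ) + 5)) < 1 ∧
      ∀ g h : G, g ≠ h →
        ∃ W : Finset G, W ⊆ Y ∧
          (Y.card : ℝ) / (10 * ((X * X).card : ℝ) + 5) ≤ (W.card : ℝ) ∧
          ∀ y₁ ∈ W, ∀ y₂ ∈ W, XApart (X * X) (g * y₁) (h * y₂) :=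
  exists_good_Y_general G hICC X hXsym hXcard
end

section
/- Let G be a countable ICC group and let X ⊆ G be a finite symmetric subset. Then there exists a switching element g ∈ G, i.e., an element g such that for every non-identity x ∈ X² one has g⁻¹ x g ∉ X². -/
open scoped Pointwise

/-- If the centralizer of `y` has finite index, the conjugacy class of `y` is finite. -/
lemma conjClass_finite_of_finiteIndex {G : Type} [Group G] (y : G)
    (hfi : (Subgroup.centralizer {y}).FiniteIndex) : {h : G | IsConj y h}.Finite := by
  set H := Subgroup.centralizer {y}
  haveI := hfi
  have hwd : ∀ a b : G, (QuotientGroup.leftRel H) a b → a * y * a⁻¹ = b * y * b⁻¹ := by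
    intro a b hab
    rw [QuotientGroup.leftRel_apply] at hab
    have := Subgroup.mem_centralizer_iff.mp hab y rfl
    -- this : y * (a⁻¹ * b) = (a⁻¹ * b) * y
    have h2 : a * (y * (a⁻¹ * b)) * b⁻¹ = a * ((a⁻¹ * b) * y) * b⁻¹ := by rw [this]
    group at h2 ⊢
    simpa using h2
  let f : G ⧸ H → G := Quotient.lift (fun g => g * y * g⁻¹) hwd
  have hsub : {h : G | IsConj y h} ⊆ Set.range f := by
    intro h hh
    obtain ⟨c, hc⟩ := isConj_iff.mp hh
    exact ⟨QuotientGroup.mk c, hc⟩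
  exact (Set.finite_range f).subset hsub

/-- Let `G` be a countable ICC group and `X ⊆ G` a finite symmetric subset.  Then there is a
switching element `g ∈ G`: for every non-identity `x ∈ X²` one has `g⁻¹ * x * g ∉ X²`. -/
theorem exists_switching_element
    (G : Type) [Group G] [Countable G] [DecidableEq G] (hICC : IsICC G)
    (X : Finset G) (hXsym : ∀ x ∈ X, x⁻¹ ∈ X) :
    ∃ g : G, ∀ x ∈ X * X, x ≠ 1 → g⁻¹ * x * g ∉ X * X := by
  classical
  by_contra hcon
  push_neg at hcon
  -- index set: pairs (x, y) in (X*X) × (X*X) with x ≠ 1 and x conjugate to y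
  set s : Finset (G × G) :=
    ((X * X) ×ˢ (X * X)).filter (fun p => p.1 ≠ 1 ∧ ∃ g : G, g⁻¹ * p.1 * g = p.2) with hs
  set g₀ : G × G → G := fun p =>
    if h : ∃ g : G, g⁻¹ * p.1 * g = p.2 then h.choose else 1 with hg₀
  set H : G × G → Subgroup G := fun p => Subgroup.centralizer {p.2} with hH
  have hcovers : ⋃ i ∈ s, (g₀ i) • (H i : Set G) = Set.univ := by
    apply Set.eq_univ_of_forall
    intro g
    obtain ⟨x, hx, hx1, hxg⟩ := hcon g
    set y := g⁻¹ * x * g with hy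
    have hps : (x, y) ∈ s := by
      simp only [hs, Finset.mem_filter, Finset.mem_product]
      exact ⟨⟨hx, hxg⟩, hx1, g, rfl⟩
    have hex : ∃ g' : G, g'⁻¹ * x * g' = y := ⟨g, rfl⟩
    refine Set.mem_biUnion hps ?_
    rw [Set.mem_smul_set_iff_inv_smul_mem]
    have hch : (g₀ (x, y))⁻¹ * x * (g₀ (x, y)) = y := by
      simp only [hg₀, dif_pos hex]
      exact hex.choose_spec
    show (g₀ (x, y))⁻¹ * g ∈ Subgroup.centralizer {y}
    rw [Subgroup.mem_centralizer_iff]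
    rintro z rfl
    set c := g₀ (x, y)
    have h1 : y = c⁻¹ * x * c := hch.symm
    have h2 : y = g⁻¹ * x * g := hy
    calc y * (c⁻¹ * g) = c⁻¹ * x * c * (c⁻¹ * g) := by rw [h1]
      _ = c⁻¹ * x * g := by group
      _ = c⁻¹ * (g * y) := by rw [h2]; group
      _ = (c⁻¹ * g) * y := by group
  obtain ⟨p, hps, hpfi⟩ := Subgroup.exists_finiteIndex_of_leftCoset_cover hcovers
  simp only [hs, Finset.mem_filter, Finset.mem_product] at hps
  obtain ⟨-, hp1, g', hg'⟩ := hps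
  have hp2 : p.2 ≠ 1 := by
    intro h
    apply hp1
    have : g'⁻¹ * p.1 * g' = 1 := h ▸ hg'
    have := congrArg (fun z => g' * z * g'⁻¹) this
    simpa [mul_assoc] using this
  have hinf := hICC.2 p.2 hp2
  exact hinf (conjClass_finite_of_finiteIndex p.2 hpfi)
end

section
/- Let G be a countable group and Z ⊆ G a finite nonempty subset. Then the set P_Z of saturated {Z}-packings is a shift: it is a nonempty, closed, G-invariant subset of the full shift {Z, ∅}^G (with the product topology and the left-translation action (g • p)(h) = p(g⁻¹h)). -/
open scoped Pointwise

/-- The left-translation action of `G` on configurations: `(g • p)(h) = p (g⁻¹ * h)`. -/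
def shiftAct {G A : Type*} [Group G] (g : G) (p : G → A) : G → A :=
  fun h => p (g⁻¹ * h)

/-- We encode the alphabet `{Z, ∅}` by `Bool`: the letter `true` stands for the block `Z` and
`false` stands for `∅`; `blockOf Z b` is the finite set named by the letter `b`. -/
def blockOf {G : Type*} [DecidableEq G] (Z : Finset G) (b : Bool) : Finset G :=
  if b then Z else ∅

/-- A `{Z}`-packing: a map `p : G → {Z, ∅}` such that the translates `g • p(g)` and `h • p(h)`
are disjoint for all distinct `g, h ∈ G` (with `g • ∅ = ∅`). -/
def IsZPacking {G : Type*} [Group G] [DecidableEq G] (Z : Finset G) (p : G → Bool) : Prop :=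
  ∀ g h : G, g ≠ h → Disjoint (g • blockOf Z (p g)) (h • blockOf Z (p h))

/-- A `{Z}`-packing `p` is saturated if there is no `{Z}`-packing `p' ≠ p` such that
`p g ≠ ∅` implies `p' g = p g`. -/
def IsSaturatedZPacking {G : Type*} [Group G] [DecidableEq G] (Z : Finset G)
    (p : G → Bool) : Prop :=
  IsZPacking Z p ∧
    ¬ ∃ p' : G → Bool, IsZPacking Z p' ∧ p' ≠ p ∧ ∀ g : G, p g = true → p' g = p g

/-- The set `P_Z` of saturated `{Z}`-packings. -/
def PZ (G : Type*) [Group G] [DecidableEq G] (Z : Finset G) : Set (G → Bool) :=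
  {p | IsSaturatedZPacking Z p}

section Aux

variable {G : Type*} [Group G] [DecidableEq G] {Z : Finset G}

lemma disjoint_smul_smul_iff (a : G) (s t : Finset G) :
    Disjoint (a • s) (a • t) ↔ Disjoint s t := by
  simp [Finset.disjoint_iff_inter_eq_empty, ← Finset.smul_finset_inter,
    Finset.smul_finset_eq_empty]

lemma IsZPacking.shift {p : G → Bool} (hp : IsZPacking Z p) (g : G) :
    IsZPacking Z (shiftAct g p) := by
  intro a b hab
  have hne : g⁻¹ * a ≠ g⁻¹ * b := by
    intro h
    exact hab (by simpa using congrArg (g * ·) h)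
  have h := hp (g⁻¹ * a) (g⁻¹ * b) hne
  rw [← disjoint_smul_smul_iff g] at h
  simpa [smul_smul, mul_inv_cancel_left, shiftAct] using h

omit [DecidableEq G] in
lemma shiftAct_inv_cancel (g : G) (p : G → Bool) :
    shiftAct g (shiftAct g⁻¹ p) = p := by
  funext x; simp [shiftAct]

/-- The local characterization of saturated packings. -/
def QZcond (G : Type*) [Group G] [DecidableEq G] (Z : Finset G) (p : G → Bool) : Prop :=
  IsZPacking Z p ∧
    ∀ g : G, p g = false → ∃ h, h ≠ g ∧ p h = true ∧ ¬ Disjoint (g • Z) (h • Z)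

lemma PZ_eq_QZ : PZ G Z = {p | QZcond G Z p} := by
  ext p
  constructor
  · rintro ⟨hp, hsat⟩
    refine ⟨hp, fun g hg => ?_⟩
    by_contra hcon
    push_neg at hcon
    refine hsat ⟨fun x => if x = g then true else p x, ?_, ?_, ?_⟩
    · intro a b hab
      simp only
      split_ifs with ha hb hb
      · exact absurd (ha.trans hb.symm) hab
      · subst ha
        cases hpb : p b with
        | false => simp [blockOf]
        | true => simpa [blockOf] using hcon b hb hpb
      · subst hb
        cases hpa : p a with
        | false => simp [blockOf]
        | true => simpa [blockOf] using (hcon a ha hpa).symm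
      · exact hp a b hab
    · intro heq
      have := congrFun heq g
      simp [hg] at this
    · intro h hh
      have hhg : h ≠ g := fun e => by rw [e, hg] at hh; cases hh
      simp [hhg]
  · rintro ⟨hp, hloc⟩
    refine ⟨hp, ?_⟩
    rintro ⟨p', hp', hne, hext⟩
    obtain ⟨g, hg⟩ := Function.ne_iff.1 hne
    have hpg : p g = false := by
      cases hpg : p g with
      | false => rfl
      | true => exact absurd (hext g hpg) hg
    have hp'g : p' g = true := by
      cases h : p' g with
      | true => rfl
      | false => rw [hpg] at hg; exact absurd h hg
    obtain ⟨h, hhg, hph, hnd⟩ := hloc g hpg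
    have hp'h : p' h = true := (hext h hph).trans hph
    have hd := hp' g h (Ne.symm hhg)
    rw [hp'g, hp'h] at hd
    exact hnd (by simpa [blockOf] using hd)

lemma isClosed_setOf_QZ : IsClosed {p : G → Bool | QZcond G Z p} := by
  have h1 : IsClosed {p : G → Bool | IsZPacking Z p} := by
    have heq : {p : G → Bool | IsZPacking Z p} =
        ⋂ (a : G) (b : G),
          {p | a ≠ b → Disjoint (a • blockOf Z (p a)) (b • blockOf Z (p b))} := by
      ext p; simp [IsZPacking, Set.mem_iInter]
    rw [heq]
    refine isClosed_iInter fun a => isClosed_iInter fun b => ?_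
    have heq2 :
        {p : G → Bool | a ≠ b → Disjoint (a • blockOf Z (p a)) (b • blockOf Z (p b))} =
        (fun p : G → Bool => (p a, p b)) ⁻¹'
          {x : Bool × Bool | a ≠ b → Disjoint (a • blockOf Z x.1) (b • blockOf Z x.2)} := rfl
    rw [heq2]
    exact (isClosed_discrete _).preimage (by fun_prop)
  have h2 : ∀ g : G, IsClosed {p : G → Bool |
      p g = false → ∃ h, h ≠ g ∧ p h = true ∧ ¬ Disjoint (g • Z) (h • Z)} := by
    intro g
    have hT : {h : G | h ≠ g ∧ ¬ Disjoint (g • Z) (h • Z)}.Finite := by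
      apply Set.Finite.subset ((Z.finite_toSet.prod Z.finite_toSet).image
        (fun zw : G × G => g * zw.1 * zw.2⁻¹))
      rintro h ⟨-, hnd⟩
      rw [Finset.not_disjoint_iff] at hnd
      obtain ⟨x, hx1, hx2⟩ := hnd
      rw [Finset.mem_smul_finset] at hx1 hx2
      obtain ⟨z, hz, hzx⟩ := hx1
      obtain ⟨w, hw, hwx⟩ := hx2
      simp only [smul_eq_mul] at hzx hwx
      exact ⟨(z, w), ⟨hz, hw⟩, mul_inv_eq_iff_eq_mul.2 (hzx.trans hwx.symm)⟩
    have heq : {p : G → Bool |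
        p g = false → ∃ h, h ≠ g ∧ p h = true ∧ ¬ Disjoint (g • Z) (h • Z)} =
        {p : G → Bool | p g = true} ∪
          ⋃ h ∈ {h : G | h ≠ g ∧ ¬ Disjoint (g • Z) (h • Z)},
            {p : G → Bool | p h = true} := by
      ext p
      simp only [Set.mem_setOf_eq, Set.mem_union, Set.mem_iUnion, exists_prop]
      constructor
      · intro hyp
        cases hpg : p g with
        | true => exact Or.inl rfl
        | false =>
          obtain ⟨h, h1, h2, h3⟩ := hyp hpg
          exact Or.inr ⟨h, ⟨h1, h3⟩, h2⟩
      · rintro (h | ⟨h, ⟨h1, h3⟩, h2⟩) hpg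
        · rw [h] at hpg; cases hpg
        · exact ⟨h, h1, h2, h3⟩
    rw [heq]
    refine IsClosed.union ?_ (hT.isClosed_biUnion fun h _ => ?_)
    · exact isClosed_eq (continuous_apply g) continuous_const
    · exact isClosed_eq (continuous_apply h) continuous_const
  have heq : {p : G → Bool | QZcond G Z p} =
      {p : G → Bool | IsZPacking Z p} ∩
        ⋂ g : G, {p : G → Bool |
          p g = false → ∃ h, h ≠ g ∧ p h = true ∧ ¬ Disjoint (g • Z) (h • Z)} := by
    ext p; simp [QZcond, Set.mem_iInter]
  rw [heq]
  exact h1.inter (isClosed_iInter h2)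

lemma exists_saturated (Z : Finset G) : ∃ p : G → Bool, IsSaturatedZPacking Z p := by
  classical
  have hih : ∀ c ⊆ {p : G → Bool | IsZPacking Z p}, IsChain (· ≤ ·) c →
      ∃ ub ∈ {p : G → Bool | IsZPacking Z p}, ∀ z ∈ c, z ≤ ub := by
    intro c hcS hchain
    refine ⟨fun g => decide (∃ q ∈ c, q g = true), ?_, ?_⟩
    · intro a b hab
      simp only
      cases hqa : decide (∃ q ∈ c, q a = true) with
      | false => simp [blockOf]
      | true =>
        cases hqb : decide (∃ q ∈ c, q b = true) with
        | false => simp [blockOf]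
        | true =>
          obtain ⟨q1, hq1c, hq1⟩ := of_decide_eq_true hqa
          obtain ⟨q2, hq2c, hq2⟩ := of_decide_eq_true hqb
          rcases hchain.total hq1c hq2c with h | h
          · have ha2 : q2 a = true := by
              have : (true : Bool) ≤ q2 a := by rw [← hq1]; exact h a
              exact le_antisymm (Bool.le_true _) this
            have hd := hcS hq2c a b hab
            rw [ha2, hq2] at hd
            exact hd
          · have hb1 : q1 b = true := by
              have : (true : Bool) ≤ q1 b := by rw [← hq2]; exact h b
              exact le_antisymm (Bool.le_true _) this
            have hd := hcS hq1c a b hab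
            rw [hq1, hb1] at hd
            exact hd
    · intro q hq g
      rcases Bool.eq_false_or_eq_true (q g) with hg | hg
      · rw [hg]
        simp only
        rw [decide_eq_true ⟨q, hq, hg⟩]
      · rw [hg]; exact Bool.false_le _
  obtain ⟨m, hm⟩ := zorn_le₀ {p : G → Bool | IsZPacking Z p} hih
  refine ⟨m, hm.prop, ?_⟩
  rintro ⟨p', hp', hne, hext⟩
  have hle : m ≤ p' := by
    intro g
    rcases Bool.eq_false_or_eq_true (m g) with hg | hg
    · rw [hg, (hext g hg).trans hg]
    · rw [hg]; exact Bool.false_le _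
  exact hne (le_antisymm (hm.2 hp' hle) hle)

end Aux

/-- For a countable group `G` and a finite nonempty `Z ⊆ G`, the set of saturated
`{Z}`-packings is a shift: a nonempty, closed, `G`-invariant subset of the full shift
`{Z, ∅}^G` (with the product topology and the left-translation action). -/
theorem PZ_isShift (G : Type) [Group G] [Countable G] [DecidableEq G]
    (Z : Finset G) (hZ : Z.Nonempty) :
    (PZ G Z).Nonempty ∧ IsClosed (PZ G Z) ∧
      ∀ p ∈ PZ G Z, ∀ g : G, shiftAct g p ∈ PZ G Z := by
  refine ⟨?_, ?_, ?_⟩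
  · obtain ⟨p, hp⟩ := exists_saturated (G := G) Z
    exact ⟨p, hp⟩
  · rw [show PZ G Z = {p | QZcond G Z p} from PZ_eq_QZ]
    exact isClosed_setOf_QZ
  · rintro p ⟨hp, hsat⟩ g
    refine ⟨hp.shift g, ?_⟩
    rintro ⟨p', hp', hne, hext⟩
    refine hsat ⟨shiftAct g⁻¹ p', hp'.shift g⁻¹, ?_, ?_⟩
    · intro heq
      apply hne
      rw [← shiftAct_inv_cancel g p', heq]
    · intro h hh
      have h1 : shiftAct g p (g * h) = true := by simpa [shiftAct] using hh
      have h2 := hext (g * h) h1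
      show p' (g⁻¹⁻¹ * h) = p h
      rw [inv_inv, hh]
      exact h2.trans h1
end

section
/- Let G be a countable group and Z ⊆ G a finite nonempty subset. Then the shift P_Z of saturated {Z}-packings, viewed as a subshift of the full shift over the alphabet {Z, ∅}, is strongly irreducible. -/
open scoped Pointwise

/-- A shift `S ⊆ A^G` is strongly irreducible if there is a finite `X ⊆ G` containing the
identity such that for all `E₁, E₂ ⊆ G` with `E₁X ∩ E₂X = ∅` and all `s₁, s₂ ∈ S` there is
`s ∈ S` agreeing with `s₁` on `E₁` and with `s₂` on `E₂`. -/
def StronglyIrreducible {G A : Type*} [Group G] (S : Set (G → A)) : Prop :=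
  ∃ X : Finset G, (1 : G) ∈ X ∧
    ∀ E₁ E₂ : Set G, (E₁ * (X : Set G)) ∩ (E₂ * (X : Set G)) = ∅ →
      ∀ s₁ ∈ S, ∀ s₂ ∈ S, ∃ s ∈ S, (∀ a ∈ E₁, s a = s₁ a) ∧ (∀ a ∈ E₂, s a = s₂ a)

section Aux
variable {G : Type*} [Group G] [DecidableEq G] {Z : Finset G}

lemma blockOf_true : blockOf Z true = Z := rfl
lemma blockOf_false : blockOf Z false = ∅ := rfl

/-- if two translated blocks overlap, the translators differ by an element of Z*Z⁻¹ -/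
lemma overlap_mem {g h : G} (H : ¬ Disjoint (g • Z) (h • Z)) :
    ∃ k ∈ (Z * Z⁻¹ : Finset G), h = g * k := by
  obtain ⟨a, ha, hb⟩ := Finset.not_disjoint_iff.1 H
  obtain ⟨z₁, hz₁, rfl⟩ := Finset.mem_smul_finset.1 ha
  obtain ⟨z₂, hz₂, hz⟩ := Finset.mem_smul_finset.1 hb
  refine ⟨z₁ * z₂⁻¹, Finset.mul_mem_mul hz₁ (Finset.inv_mem_inv hz₂), ?_⟩
  have : h * z₂ = g * z₁ := hz
  group
  rw [← this]
  group

lemma bool_le_iff {p p' : G → Bool} : p ≤ p' ↔ ∀ g, p g = true → p' g = true := by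
  constructor
  · intro h g hg
    have := h g
    rw [hg] at this
    exact Bool.eq_true_of_true_le this
  · intro h g
    cases hg : p g
    · exact Bool.false_le _
    · exact (h g hg).ge

/-- a saturated packing has a "blocking neighbor" at every false point -/
lemma saturated_neighbor {p : G → Bool} (hp : IsSaturatedZPacking Z p) {g : G}
    (hg : p g = false) : ∃ h, h ≠ g ∧ p h = true ∧ ¬ Disjoint (g • Z) (h • Z) := by
  classical
  by_contra hcon
  push_neg at hcon
  apply hp.2
  refine ⟨Function.update p g true, ?_, ?_, ?_⟩
  · intro a b hab
    rcases eq_or_ne a g with hag | hag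
    · subst hag
      rw [Function.update_self, Function.update_of_ne (Ne.symm hab)]
      cases hb : p b
      · simp [blockOf_false]
      · exact hcon b (Ne.symm hab) hb
    · rw [Function.update_of_ne hag]
      rcases eq_or_ne b g with hbg | hbg
      · subst hbg
        rw [Function.update_self]
        cases ha : p a
        · simp [blockOf_false]
        · exact (hcon a hag ha).symm
      · rw [Function.update_of_ne hbg]
        exact hp.1 a b hab
  · intro h
    have := congrFun h g
    rw [Function.update_self, hg] at this
    exact Bool.noConfusion this
  · intro a ha
    have : a ≠ g := fun h => by rw [h, hg] at ha; exact Bool.noConfusion ha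
    rw [Function.update_of_ne this]

/-- every packing extends to a saturated one -/
lemma exists_saturated_ext (Z : Finset G) {q : G → Bool} (hq : IsZPacking Z q) :
    ∃ s : G → Bool, IsSaturatedZPacking Z s ∧ q ≤ s := by
  classical
  have hbdd : ∀ c ⊆ {p : G → Bool | IsZPacking Z p}, IsChain (· ≤ ·) c → ∀ y ∈ c,
      ∃ ub ∈ {p : G → Bool | IsZPacking Z p}, ∀ z ∈ c, z ≤ ub := by
    intro c hc hchain y hy
    refine ⟨fun g => if ∃ p ∈ c, p g = true then true else false, ?_, ?_⟩
    · intro g h hgh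
      by_cases h1 : ∃ p ∈ c, p g = true
      · by_cases h2 : ∃ p ∈ c, p h = true
        · simp only [if_pos h1, if_pos h2]
          obtain ⟨p1, hp1, hpg⟩ := h1
          obtain ⟨p2, hp2, hph⟩ := h2
          rcases hchain.total hp1 hp2 with hle | hle
          · have := hc hp2 g h hgh
            rwa [bool_le_iff.1 hle g hpg, hph] at this
          · have := hc hp1 g h hgh
            rwa [hpg, bool_le_iff.1 hle h hph] at this
        · simp [if_neg h2, blockOf_false]
      · simp [if_neg h1, blockOf_false]
    · intro p hp
      exact bool_le_iff.2 fun g hg => if_pos ⟨p, hp, hg⟩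
  obtain ⟨m, hqm, hm⟩ := zorn_le_nonempty₀ {p : G → Bool | IsZPacking Z p} hbdd q hq
  refine ⟨m, ⟨hm.1, ?_⟩, hqm⟩
  rintro ⟨p', hp', hne, hext⟩
  have hle : m ≤ p' := bool_le_iff.2 fun g hg => by rw [hext g hg, hg]
  exact hne (le_antisymm (hm.2 hp' hle) hle)

end Aux

/-- For a countable group `G` and a finite nonempty `Z ⊆ G`, the shift `P_Z` of saturated
`{Z}`-packings is strongly irreducible. -/
theorem PZ_stronglyIrreducible (G : Type) [Group G] [Countable G] [DecidableEq G]
    (Z : Finset G) (hZ : Z.Nonempty) :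
    StronglyIrreducible (PZ G Z) := by
  classical
  obtain ⟨z0, hz0⟩ := hZ
  set K : Finset G := Z * Z⁻¹ with hKdef
  have h1K : (1 : G) ∈ K := by
    have := Finset.mul_mem_mul hz0 (Finset.inv_mem_inv hz0)
    rwa [mul_inv_cancel] at this
  have hKsymm : ∀ k ∈ K, k⁻¹ ∈ K := by
    intro k hk
    rw [hKdef] at hk ⊢
    obtain ⟨a, ha, b, hb, rfl⟩ := Finset.mem_mul.1 hk
    obtain ⟨b', hb', rfl⟩ := Finset.mem_inv.1 hb
    refine Finset.mem_mul.2 ⟨b', hb', a⁻¹, Finset.inv_mem_inv ha, by group⟩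
  refine ⟨K * K, by simpa using Finset.mul_mem_mul h1K h1K, ?_⟩
  intro E₁ E₂ hE s₁ hs₁ s₂ hs₂
  -- pieces about the sets
  have hsub : ∀ (E : Set G) (x : G), x ∈ E * (K : Set G) →
      x ∈ E * ((K * K : Finset G) : Set G) := by
    rintro E x ⟨e, he, k, hk, rfl⟩
    have hk' : k ∈ K * K := by
      have := Finset.mul_mem_mul (Finset.mem_coe.1 hk) h1K
      rwa [mul_one] at this
    exact ⟨e, he, k, Finset.mem_coe.2 hk', rfl⟩
  have hmulK : ∀ (E : Set G) (x k : G), x ∈ E * (K : Set G) → k ∈ K →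
      x * k ∈ E * ((K * K : Finset G) : Set G) := by
    rintro E x k ⟨e, he, k', hk', rfl⟩ hk
    exact ⟨e, he, k' * k,
      Finset.mem_coe.2 (Finset.mul_mem_mul (Finset.mem_coe.1 hk') hk), (mul_assoc _ _ _).symm⟩
  have hfalse : ∀ x, x ∈ E₁ * ((K * K : Finset G) : Set G) →
      x ∈ E₂ * ((K * K : Finset G) : Set G) → False := by
    intro x h1 h2
    have hx : x ∈ (E₁ * ((K * K : Finset G) : Set G)) ∩ (E₂ * ((K * K : Finset G) : Set G)) :=
      ⟨h1, h2⟩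
    rw [hE] at hx
    exact hx
  have h12 : ∀ x, x ∈ E₁ * (K : Set G) → x ∈ E₂ * (K : Set G) → False :=
    fun x h1 h2 => hfalse x (hsub _ _ h1) (hsub _ _ h2)
  have hmemE : ∀ (E : Set G) (a : G), a ∈ E → a ∈ E * (K : Set G) :=
    fun E a ha => ⟨a, ha, 1, Finset.mem_coe.2 h1K, mul_one a⟩
  -- packing disjointness in concrete form
  have hdstep : ∀ (p : G → Bool), IsZPacking Z p → ∀ g h, g ≠ h → p g = true → p h = true →
      Disjoint (g • Z) (h • Z) := by
    intro p hp g h hgh hg hh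
    have := hp g h hgh
    rwa [hg, hh, blockOf_true] at this
  -- the glued configuration
  set q : G → Bool := fun g =>
    if g ∈ E₁ * (K : Set G) then s₁ g else if g ∈ E₂ * (K : Set G) then s₂ g else false
    with hqdef
  have hq1 : ∀ g ∈ E₁ * (K : Set G), q g = s₁ g := fun g hg => if_pos hg
  have hq2 : ∀ g ∈ E₂ * (K : Set G), q g = s₂ g := by
    intro g hg
    have hg1 : g ∉ E₁ * (K : Set G) := fun h => h12 g h hg
    simp only [hqdef, if_neg hg1, if_pos hg]
  have hqtrue : ∀ g, q g = true →
      (g ∈ E₁ * (K : Set G) ∧ s₁ g = true) ∨ (g ∈ E₂ * (K : Set G) ∧ s₂ g = true) := by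
    intro g hg
    by_cases h1 : g ∈ E₁ * (K : Set G)
    · left; exact ⟨h1, by rwa [hq1 g h1] at hg⟩
    · by_cases h2 : g ∈ E₂ * (K : Set G)
      · right; exact ⟨h2, by rwa [hq2 g h2] at hg⟩
      · rw [hqdef] at hg; simp only [if_neg h1, if_neg h2] at hg; exact absurd hg (by simp)
  have hqpack : IsZPacking Z q := by
    intro g h hgh
    cases cg : q g with
    | false => simp [blockOf_false]
    | true =>
      cases ch : q h with
      | false => simp [blockOf_false]
      | true =>
        rw [blockOf_true]
        by_contra hnd
        obtain ⟨k, hk, rfl⟩ := overlap_mem hnd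
        rcases hqtrue g cg with ⟨hgm, hgs⟩ | ⟨hgm, hgs⟩ <;>
          rcases hqtrue _ ch with ⟨hhm, hhs⟩ | ⟨hhm, hhs⟩
        · exact hnd (hdstep s₁ hs₁.1 g _ hgh hgs hhs)
        · exact hfalse _ (hmulK E₁ g k hgm hk) (hsub _ _ hhm)
        · exact hfalse _ (hsub _ _ hhm) (hmulK E₂ g k hgm hk)
        · exact hnd (hdstep s₂ hs₂.1 g _ hgh hgs hhs)
  obtain ⟨s, hs_sat, hqs⟩ := exists_saturated_ext Z hqpack
  refine ⟨s, hs_sat, ?_, ?_⟩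
  · intro a haE
    have haK : a ∈ E₁ * (K : Set G) := hmemE E₁ a haE
    cases hsa : s₁ a with
    | true => exact bool_le_iff.1 hqs a (by rw [hq1 a haK, hsa])
    | false =>
      by_contra hs
      have hsa' : s a = true := by
        cases h : s a
        · exact absurd h hs
        · rfl
      obtain ⟨h, hne, hh, hnd⟩ := saturated_neighbor hs₁ hsa
      obtain ⟨k, hk, rfl⟩ := overlap_mem hnd
      have hhK : a * k ∈ E₁ * (K : Set G) := ⟨a, haE, k, hk, rfl⟩
      have hsh : s (a * k) = true := bool_le_iff.1 hqs _ (by rw [hq1 _ hhK, hh])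
      exact hnd (hdstep s hs_sat.1 a (a * k) (Ne.symm hne) hsa' hsh)
  · intro a haE
    have haK : a ∈ E₂ * (K : Set G) := hmemE E₂ a haE
    cases hsa : s₂ a with
    | true => exact bool_le_iff.1 hqs a (by rw [hq2 a haK, hsa])
    | false =>
      by_contra hs
      have hsa' : s a = true := by
        cases h : s a
        · exact absurd h hs
        · rfl
      obtain ⟨h, hne, hh, hnd⟩ := saturated_neighbor hs₂ hsa
      obtain ⟨k, hk, rfl⟩ := overlap_mem hnd
      have hhK : a * k ∈ E₂ * (K : Set G) := ⟨a, haE, k, hk, rfl⟩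
      have hsh : s (a * k) = true := bool_le_iff.1 hqs _ (by rw [hq2 _ hhK, hh])
      exact hnd (hdstep s hs_sat.1 a (a * k) (Ne.symm hne) hsa' hsh)
end
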